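/- arXiv:2009.04269 — 2 statements merged into one kernel-verified Lean document; each statement's English description precedes it below -/
import Mathlib

section
/- For every n ≥ 1, the number of permutations in S_n avoiding both 213 and 231 is 2^{n-1}. -/
open Finset
open scoped Classical

/-- Number of components of a permutation of `Fin n` (0-based version of
`|{i ∈ [n] : π(j) ≤ i for all j ≤ i}|`). -/
def comps {n : ℕ} (π : Equiv.Perm (Fin n)) : ℕ :=
  (Finset.univ.filter fun i : Fin n => ∀ j, j ≤ i → π j ≤ i).card

/-- Number of descents. -/
def des {n : ℕ} (π : Equiv.Perm (Fin n)) : ℕ :=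
  (Finset.univ.filter fun i : Fin n =>
    ∃ h : (i : ℕ) + 1 < n, π ⟨(i : ℕ) + 1, h⟩ < π i).card

/-- Length of the initial ascending run: `min(DES(π) ∪ {n})` with 1-based descent positions. -/
noncomputable def iar {n : ℕ} (π : Equiv.Perm (Fin n)) : ℕ :=
  sInf {k : ℕ | k = n ∨ 0 < k ∧ ∃ h : k < n, π ⟨k, h⟩ < π ⟨k - 1, by omega⟩}

/-- `π` contains the pattern `σ`. -/
def ContainsPat {n m : ℕ} (π : Equiv.Perm (Fin n)) (σ : Equiv.Perm (Fin m)) : Prop :=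
  ∃ f : Fin m → Fin n, StrictMono f ∧ ∀ a b : Fin m, σ a < σ b ↔ π (f a) < π (f b)

/-- `π` avoids the pattern `σ`. -/
def AvoidsPat {n m : ℕ} (π : Equiv.Perm (Fin n)) (σ : Equiv.Perm (Fin m)) : Prop :=
  ¬ ContainsPat π σ

def pat123 : Equiv.Perm (Fin 3) := ⟨![0, 1, 2], ![0, 1, 2], by decide, by decide⟩
def pat132 : Equiv.Perm (Fin 3) := ⟨![0, 2, 1], ![0, 2, 1], by decide, by decide⟩
def pat213 : Equiv.Perm (Fin 3) := ⟨![1, 0, 2], ![1, 0, 2], by decide, by decide⟩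
def pat231 : Equiv.Perm (Fin 3) := ⟨![1, 2, 0], ![2, 0, 1], by decide, by decide⟩
def pat312 : Equiv.Perm (Fin 3) := ⟨![2, 0, 1], ![1, 2, 0], by decide, by decide⟩
def pat321 : Equiv.Perm (Fin 3) := ⟨![2, 1, 0], ![2, 1, 0], by decide, by decide⟩

/-- Direct sum of two permutations. -/
def directSum {m l : ℕ} (π : Equiv.Perm (Fin m)) (σ : Equiv.Perm (Fin l)) :
    Equiv.Perm (Fin (m + l)) :=
  finSumFinEquiv.permCongr (Equiv.sumCongr π σ)

/-- Direct sum of a finite family of permutations. -/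
def dsum : {k : ℕ} → (a : Fin k → ℕ) → ((i : Fin k) → Equiv.Perm (Fin (a i))) →
    Equiv.Perm (Fin (∑ i, a i))
  | 0, _, _ => Equiv.refl _
  | _ + 1, a, τ =>
      (finCongr (Fin.sum_univ_succ a).symm).permCongr
        (directSum (τ 0) (dsum (fun i => a i.succ) (fun i => τ i.succ)))

/-- Set of values of left-to-right maxima. -/
noncomputable def LMAX {n : ℕ} (π : Equiv.Perm (Fin n)) : Finset (Fin n) :=
  Finset.univ.filter fun v => ∃ i, π i = v ∧ ∀ j, j < i → π j < v

/-- Set of values of left-to-right minima. -/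
noncomputable def LMIN {n : ℕ} (π : Equiv.Perm (Fin n)) : Finset (Fin n) :=
  Finset.univ.filter fun v => ∃ i, π i = v ∧ ∀ j, j < i → v < π j

/-- Set of descent bottoms. -/
noncomputable def DESB {n : ℕ} (π : Equiv.Perm (Fin n)) : Finset (Fin n) :=
  Finset.univ.filter fun v => ∃ i : ℕ, ∃ h : i + 1 < n,
    π ⟨i + 1, h⟩ = v ∧ π ⟨i + 1, h⟩ < π ⟨i, by omega⟩

/-!
A permutation avoids both 213 and 231 exactly when each entry is either the smallest or the largest
of the entries from its position on. Such a permutation is determined by its ascent set: for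
`i < j`, `π i < π j` holds iff `i` is an ascent. Conversely every subset of the first `n - 1`
positions is the ascent set of one, built by placing at each ascent the smallest unused value and
at each descent the largest one. Hence there are `2 ^ (n - 1)` of them.
-/

theorem strictMono_vec_three {α : Type*} [Preorder α] {a b c : α} (hab : a < b) (hbc : b < c) :
    StrictMono ![a, b, c] := by
  have hac := hab.trans hbc
  intro i j hij
  fin_cases i <;> fin_cases j <;> simp_all

theorem Nat.count_eq_true_add_count_eq_false (b : ℕ → Bool) (i : ℕ) :
    Nat.count (b · = true) i + Nat.count (b · = false) i = i := by
  induction i with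
  | zero => simp
  | succ i ih => cases hb : b i <;> simp [Nat.count_succ, hb] <;> omega

namespace Equiv.Perm

theorem eq_of_lt_iff_lt {α : Type*} [LinearOrder α] [WellFoundedLT α] {π σ : Perm α}
    (h : ∀ a b, π a < π b ↔ σ a < σ b) : π = σ := by
  let e : α ≃o α :=
    { toEquiv := π.symm.trans σ
      map_rel_iff' := fun {a b} => by
        simpa [not_lt] using (not_congr (h (π.symm b) (π.symm a))).symm }
  ext a
  simpa [e] using (congrArg (· (π a)) (Subsingleton.elim e (OrderIso.refl α))).symm

variable {m n : ℕ}

def SuffixExtremal (π : Perm (Fin n)) : Prop :=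
  ∀ i j k, i < j → i < k → ¬ (π j < π i ∧ π i < π k)

def ascents (π : Perm (Fin (m + 1))) : Fin m → Bool :=
  fun i => decide (π i.castSucc < π i.succ)

theorem avoidsPat_213_and_231_iff (π : Perm (Fin n)) :
    AvoidsPat π pat213 ∧ AvoidsPat π pat231 ↔ π.SuffixExtremal := by
  constructor
  · rintro ⟨h213, h231⟩ i j k hij hik ⟨hji, hik'⟩
    have hjk' : π j < π k := hji.trans hik'
    have := hji.asymm; have := hik'.asymm; have := hjk'.asymm
    rcases lt_trichotomy j k with hjk | rfl | hkj
    · exact h213 ⟨![i, j, k], strictMono_vec_three hij hjk, by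
        intro a b; fin_cases a <;> fin_cases b <;> simp_all [pat213]⟩
    · exact lt_irrefl _ hjk'
    · exact h231 ⟨![i, k, j], strictMono_vec_three hik hkj, by
        intro a b; fin_cases a <;> fin_cases b <;> simp_all [pat231]⟩
  · intro h
    constructor
    · rintro ⟨f, hf, hiff⟩
      exact h (f 0) (f 1) (f 2) (hf (by decide)) (hf (by decide))
        ⟨(hiff 1 0).mp (by decide), (hiff 0 2).mp (by decide)⟩
    · rintro ⟨f, hf, hiff⟩
      exact h (f 0) (f 2) (f 1) (hf (by decide)) (hf (by decide))
        ⟨(hiff 2 0).mp (by decide), (hiff 0 1).mp (by decide)⟩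

theorem SuffixExtremal.lt_iff_lt_succ {π : Perm (Fin (m + 1))} (hπ : π.SuffixExtremal)
    {i : Fin m} {j : Fin (m + 1)} (hij : i.castSucc < j) :
    π i.castSucc < π j ↔ π i.castSucc < π i.succ := by
  have hsucc : i.castSucc < i.succ := Fin.castSucc_lt_succ
  constructor
  · intro hj
    by_contra h
    exact hπ _ _ _ hsucc hij ⟨lt_of_le_of_ne (not_lt.mp h) (π.injective.ne hsucc.ne'), hj⟩
  · intro hs
    by_contra h
    exact hπ _ _ _ hij hsucc ⟨lt_of_le_of_ne (not_lt.mp h) (π.injective.ne hij.ne'), hs⟩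

theorem SuffixExtremal.lt_iff_lt_of_ascents_eq {π σ : Perm (Fin (m + 1))}
    (hπ : π.SuffixExtremal) (hσ : σ.SuffixExtremal) (h : π.ascents = σ.ascents)
    {a b : Fin (m + 1)} (hab : a < b) : π a < π b ↔ σ a < σ b := by
  obtain ⟨i, rfl⟩ : ∃ i : Fin m, i.castSucc = a :=
    ⟨a.castPred (Fin.ne_last_of_lt hab), Fin.castSucc_castPred _ _⟩
  simpa [hπ.lt_iff_lt_succ hab, hσ.lt_iff_lt_succ hab, ascents] using congrFun h i

theorem SuffixExtremal.eq_of_ascents_eq {π σ : Perm (Fin (m + 1))}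
    (hπ : π.SuffixExtremal) (hσ : σ.SuffixExtremal) (h : π.ascents = σ.ascents) : π = σ := by
  refine eq_of_lt_iff_lt fun a b => ?_
  rcases lt_trichotomy a b with hab | rfl | hba
  · exact hπ.lt_iff_lt_of_ascents_eq hσ h hab
  · simp
  · rw [← not_iff_not, not_lt, not_lt, le_iff_lt_or_eq, le_iff_lt_or_eq,
      hπ.lt_iff_lt_of_ascents_eq hσ h hba, π.injective.eq_iff, σ.injective.eq_iff]

section OfAscents

variable (m) (b : ℕ → Bool)

-- At position `m` both branches give the one value left, so `b m` is irrelevant.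
def ofAscentsEntry (i : ℕ) : ℕ :=
  if b i then Nat.count (b · = true) i else m - Nat.count (b · = false) i

variable {m b}

theorem ofAscentsEntry_le {i : ℕ} (hi : i ≤ m) : ofAscentsEntry m b i ≤ m := by
  have := Nat.count_eq_true_add_count_eq_false b i
  unfold ofAscentsEntry; split_ifs <;> omega

theorem ofAscentsEntry_lt_of_true {i j : ℕ} (hb : b i = true) (hij : i < j) (hj : j ≤ m) :
    ofAscentsEntry m b i < ofAscentsEntry m b j := by
  have := Nat.count_strict_mono (p := (b · = true)) hb hij
  have := Nat.count_eq_true_add_count_eq_false b j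
  rw [ofAscentsEntry, ofAscentsEntry, if_pos hb]
  split_ifs <;> omega

theorem ofAscentsEntry_lt_of_false {i j : ℕ} (hb : b i = false) (hij : i < j) (hj : j ≤ m) :
    ofAscentsEntry m b j < ofAscentsEntry m b i := by
  have := Nat.count_strict_mono (p := (b · = false)) hb hij
  have := Nat.count_eq_true_add_count_eq_false b i
  have := Nat.count_eq_true_add_count_eq_false b j
  rw [ofAscentsEntry, ofAscentsEntry, if_neg (show b i ≠ true by simp [hb])]
  split_ifs <;> omega

theorem ofAscentsEntry_injOn : Set.InjOn (ofAscentsEntry m b) (Set.Iic m) := by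
  intro i hi j hj h
  by_contra hne
  wlog hij : i < j generalizing i j
  · exact this hj hi h.symm (Ne.symm hne) (lt_of_le_of_ne (not_lt.mp hij) (Ne.symm hne))
  cases hb : b i
  · exact (ofAscentsEntry_lt_of_false hb hij hj).ne' h
  · exact (ofAscentsEntry_lt_of_true hb hij hj).ne h

variable (m b)

noncomputable def ofAscents : Perm (Fin (m + 1)) :=
  Equiv.ofBijective
    (fun i => ⟨ofAscentsEntry m b i, Nat.lt_succ_of_le (ofAscentsEntry_le i.is_le)⟩)
    (Finite.injective_iff_bijective.mp fun i j h =>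
      Fin.ext (ofAscentsEntry_injOn (Set.mem_Iic.mpr i.is_le) (Set.mem_Iic.mpr j.is_le)
        (congrArg Fin.val h)))

theorem ofAscents_lt_iff (i j : Fin (m + 1)) :
    ofAscents m b i < ofAscents m b j ↔ ofAscentsEntry m b i < ofAscentsEntry m b j :=
  Iff.rfl

theorem suffixExtremal_ofAscents : (ofAscents m b).SuffixExtremal := by
  rintro i j k hij hik ⟨hji, hik'⟩
  rw [ofAscents_lt_iff] at hji hik'
  cases hb : b i
  · exact lt_asymm hik' (ofAscentsEntry_lt_of_false hb hik k.is_le)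
  · exact lt_asymm hji (ofAscentsEntry_lt_of_true hb hij j.is_le)

theorem ascents_ofAscents (i : Fin m) : (ofAscents m b).ascents i = b i := by
  have hsucc : (i : ℕ) < i + 1 := Nat.lt_succ_self i
  simp only [ascents, ofAscents_lt_iff, Fin.val_castSucc, Fin.val_succ]
  cases hb : b i
  · simpa using (ofAscentsEntry_lt_of_false hb hsucc i.succ.is_le).le
  · simpa using ofAscentsEntry_lt_of_true hb hsucc i.succ.is_le

end OfAscents

theorem card_suffixExtremal (m : ℕ) :
    (univ.filter fun π : Perm (Fin (m + 1)) => π.SuffixExtremal).card = 2 ^ m :=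
  calc _ = (univ : Finset (Fin m → Bool)).card :=
        card_bij (fun π _ => π.ascents) (fun _ _ => mem_univ _)
          (fun π hπ σ hσ h => (mem_filter.mp hπ).2.eq_of_ascents_eq (mem_filter.mp hσ).2 h)
          (fun c _ => ⟨ofAscents m (fun i => if h : i < m then c ⟨i, h⟩ else true),
            mem_filter.mpr ⟨mem_univ _, suffixExtremal_ofAscents _ _⟩,
            funext fun i => by simp [ascents_ofAscents]⟩)
    _ = 2 ^ m := by simp

end Equiv.Perm

/-- `|S_n(213,231)| = 2^{n-1}` for `n ≥ 1`. -/
theorem card_avoid_213_231 (n : ℕ) (hn : 1 ≤ n) :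
    (Finset.univ.filter fun π : Equiv.Perm (Fin n) =>
      AvoidsPat π pat213 ∧ AvoidsPat π pat231).card = 2 ^ (n - 1) := by
  obtain ⟨m, rfl⟩ : ∃ m, n = m + 1 := ⟨n - 1, by omega⟩
  rw [filter_congr fun π _ => Equiv.Perm.avoidsPat_213_and_231_iff π,
    Equiv.Perm.card_suffixExtremal, Nat.add_sub_cancel]
end

section
/- For every n ≥ 1, there is a bijection θ: S_n(213) → S_n(231) with π(1) = θ(π)(1), des(π) = des(θ(π)), iar(π) = comp(θ(π)), and comp(π) = iar(θ(π)). In particular, for all k, ℓ: |{π ∈ S_n(213) : iar(π)=k, comp(π)=ℓ}| = |{σ ∈ S_n(231) : comp(σ)=k, iar(σ)=ℓ}|. -/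
open Finset
open scoped Classical

-- ## Helpers

lemma sInf_eq_of_forall {S : Set ℕ} {a : ℕ} (ha : a ∈ S) (h : ∀ k < a, k ∉ S) :
    sInf S = a := by
  refine le_antisymm (Nat.sInf_le ha) ?_
  by_contra hc
  push_neg at hc
  exact h _ hc (Nat.sInf_mem ⟨a, ha⟩)

/-- values of a permutation as a function `ℕ → ℕ`. -/
def pv {n : ℕ} (π : Equiv.Perm (Fin n)) (i : ℕ) : ℕ :=
  if h : i < n then (π ⟨i, h⟩ : ℕ) else 0

lemma pv_eq {n : ℕ} (π : Equiv.Perm (Fin n)) {i : ℕ} (h : i < n) :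
    pv π i = (π ⟨i, h⟩ : ℕ) := dif_pos h

lemma pv_lt {n : ℕ} (π : Equiv.Perm (Fin n)) {i : ℕ} (h : i < n) : pv π i < n := by
  simp only [pv, dif_pos h]; exact (π ⟨i, h⟩).isLt

lemma pv_inj {n : ℕ} (π : Equiv.Perm (Fin n)) {i j : ℕ} (hi : i < n) (hj : j < n)
    (h : pv π i = pv π j) : i = j := by
  simp only [pv, dif_pos hi, dif_pos hj] at h
  have := π.injective (Fin.val_injective h)
  simpa [Fin.ext_iff] using this

lemma des_eq_pv {n : ℕ} (π : Equiv.Perm (Fin n)) :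
    des π = ((range (n-1)).filter fun i => pv π (i+1) < pv π i).card := by
  unfold des
  apply Finset.card_bij (fun (a : Fin n) _ => (a : ℕ))
  · intro a ha
    simp only [mem_filter, mem_univ, true_and] at ha
    obtain ⟨h, hlt⟩ := ha
    simp only [mem_filter, mem_range]
    refine ⟨by omega, ?_⟩
    rw [pv_eq π h, pv_eq π a.isLt]
    simp only [Fin.eta]
    exact Fin.lt_def.mp hlt
  · intro a _ b _ hab
    exact Fin.val_injective hab
  · intro b hb
    simp only [mem_filter, mem_range] at hb
    obtain ⟨hb1, hb2⟩ := hb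
    refine ⟨⟨b, by omega⟩, ?_, rfl⟩
    simp only [mem_filter, mem_univ, true_and]
    refine ⟨by omega, ?_⟩
    rw [pv_eq π (show b + 1 < n by omega), pv_eq π (show b < n by omega)] at hb2
    exact Fin.lt_def.mpr hb2

lemma comps_eq_pv {n : ℕ} (π : Equiv.Perm (Fin n)) :
    comps π = ((range n).filter fun i => ∀ j ≤ i, pv π j ≤ i).card := by
  unfold comps
  apply Finset.card_bij (fun (a : Fin n) _ => (a : ℕ))
  · intro a ha
    simp only [mem_filter, mem_univ, true_and] at ha
    simp only [mem_filter, mem_range]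
    refine ⟨a.isLt, fun j hj => ?_⟩
    have hjn : j < n := lt_of_le_of_lt hj a.isLt
    have := ha ⟨j, hjn⟩ (by simpa [Fin.le_def] using hj)
    rw [pv_eq π hjn]
    exact Fin.le_def.mp this
  · intro a _ b _ hab
    exact Fin.val_injective hab
  · intro b hb
    simp only [mem_filter, mem_range] at hb
    obtain ⟨hb1, hb2⟩ := hb
    refine ⟨⟨b, hb1⟩, ?_, rfl⟩
    simp only [mem_filter, mem_univ, true_and]
    intro j hj
    have := hb2 (j : ℕ) (by simpa [Fin.le_def] using hj)
    rw [pv_eq π j.isLt] at this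
    exact Fin.le_def.mpr this

lemma iar_eq_pv {n : ℕ} (π : Equiv.Perm (Fin n)) :
    iar π = sInf {k : ℕ | k = n ∨ (0 < k ∧ k < n ∧ pv π k < pv π (k-1))} := by
  unfold iar
  congr 1
  ext k
  simp only [Set.mem_setOf_eq]
  constructor
  · rintro (h | ⟨hk, h, hlt⟩)
    · exact Or.inl h
    · refine Or.inr ⟨hk, h, ?_⟩
      rw [pv_eq π h, pv_eq π (show k - 1 < n by omega)]
      exact Fin.lt_def.mp hlt
  · rintro (h | ⟨hk, h, hlt⟩)
    · exact Or.inl h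
    · refine Or.inr ⟨hk, h, ?_⟩
      rw [pv_eq π h, pv_eq π (show k - 1 < n by omega)] at hlt
      exact Fin.lt_def.mpr hlt

lemma iar_le {n : ℕ} (π : Equiv.Perm (Fin n)) : iar π ≤ n := by
  unfold iar; exact Nat.sInf_le (Or.inl rfl)

lemma one_le_iar {n : ℕ} (hn : 0 < n) (π : Equiv.Perm (Fin n)) : 1 ≤ iar π := by
  rcases Nat.eq_zero_or_pos (iar π) with h | h
  · exfalso
    have hmem := Nat.sInf_mem (s := {k : ℕ | k = n ∨ 0 < k ∧ ∃ h : k < n,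
      π ⟨k, h⟩ < π ⟨k - 1, by omega⟩}) ⟨n, Or.inl rfl⟩
    rw [show sInf {k : ℕ | k = n ∨ 0 < k ∧ ∃ h : k < n,
      π ⟨k, h⟩ < π ⟨k - 1, by omega⟩} = iar π from rfl, h] at hmem
    rcases hmem with h0 | ⟨h0, _⟩ <;> omega
  · exact h

lemma comps_le {n : ℕ} (π : Equiv.Perm (Fin n)) : comps π ≤ n := by
  unfold comps
  calc _ ≤ (univ : Finset (Fin n)).card := card_filter_le _ _
  _ = n := by simp

lemma des_le {n : ℕ} (π : Equiv.Perm (Fin n)) : des π ≤ n := by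
  unfold des
  calc _ ≤ (univ : Finset (Fin n)).card := card_filter_le _ _
  _ = n := by simp

lemma one_le_comps {n : ℕ} (hn : 0 < n) (π : Equiv.Perm (Fin n)) : 1 ≤ comps π := by
  rw [comps_eq_pv]
  refine Finset.card_pos.mpr ⟨n - 1, ?_⟩
  simp only [mem_filter, mem_range]
  refine ⟨by omega, fun j hj => ?_⟩
  have := pv_lt π (show j < n by omega)
  omega

lemma card_filter_eq_sum_fib {α : Type*} [Fintype α] (P : α → Prop) (g : α → ℕ) (M : ℕ)
    (hb : ∀ a, P a → g a < M) :
    (univ.filter P).card = ∑ v ∈ range M, (univ.filter fun a => P a ∧ g a = v).card := by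
  rw [Finset.card_eq_sum_card_fiberwise (f := g) (t := range M)
    (fun x hx => by simp only [Finset.mem_coe, mem_filter] at hx; simpa using hb x hx.2)]
  refine Finset.sum_congr rfl fun v _ => ?_
  rw [Finset.filter_filter]

-- ## Pattern characterizations

lemma contains213_iff {n : ℕ} (π : Equiv.Perm (Fin n)) :
    ContainsPat π pat213 ↔
      ∃ i j k : Fin n, i < j ∧ j < k ∧ π j < π i ∧ π i < π k := by
  constructor
  · rintro ⟨g, hg, hiff⟩
    exact ⟨g 0, g 1, g 2, hg (by decide), hg (by decide),
      (hiff 1 0).mp (by decide), (hiff 0 2).mp (by decide)⟩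
  · rintro ⟨i, j, k, hij, hjk, h1, h2⟩
    refine ⟨fun a => if a = 0 then i else if a = 1 then j else k, ?_, ?_⟩
    · intro a b hab
      fin_cases a <;> fin_cases b <;>
        first
          | exact hij | exact hjk | exact hij.trans hjk
          | exact absurd hab (by decide)
    · intro a b
      fin_cases a <;> fin_cases b <;>
        first
          | exact iff_of_false (by decide) (lt_irrefl _)
          | exact iff_of_false (by decide) (asymm h1)
          | exact iff_of_true (by decide) h2
          | exact iff_of_true (by decide) h1
          | exact iff_of_true (by decide) (h1.trans h2)
          | exact iff_of_false (by decide) (asymm h2)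
          | exact iff_of_false (by decide) (asymm (h1.trans h2))

lemma contains231_iff {n : ℕ} (π : Equiv.Perm (Fin n)) :
    ContainsPat π pat231 ↔
      ∃ i j k : Fin n, i < j ∧ j < k ∧ π k < π i ∧ π i < π j := by
  constructor
  · rintro ⟨g, hg, hiff⟩
    exact ⟨g 0, g 1, g 2, hg (by decide), hg (by decide),
      (hiff 2 0).mp (by decide), (hiff 0 1).mp (by decide)⟩
  · rintro ⟨i, j, k, hij, hjk, h1, h2⟩
    refine ⟨fun a => if a = 0 then i else if a = 1 then j else k, ?_, ?_⟩
    · intro a b hab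
      fin_cases a <;> fin_cases b <;>
        first
          | exact hij | exact hjk | exact hij.trans hjk
          | exact absurd hab (by decide)
    · intro a b
      fin_cases a <;> fin_cases b <;>
        first
          | exact iff_of_false (by decide) (lt_irrefl _)
          | exact iff_of_false (by decide) (asymm h1)
          | exact iff_of_true (by decide) h2
          | exact iff_of_true (by decide) h1
          | exact iff_of_true (by decide) (h1.trans h2)
          | exact iff_of_false (by decide) (asymm h2)
          | exact iff_of_false (by decide) (asymm (h1.trans h2))

-- ## The build constructions

/-- word `c · C · (c+1+D)` : the 231-shape (and, with `c = 0`, the prepend-0 map). -/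
def bFun (n c e : ℕ) (hn : n = c + e + 1) (C : Equiv.Perm (Fin c)) (D : Equiv.Perm (Fin e)) :
    Fin n → Fin n := fun i =>
  if h0 : i.val = 0 then ⟨c, by omega⟩
  else if h : i.val ≤ c then
    ⟨(C ⟨i.val - 1, by omega⟩).val, by have := (C ⟨i.val - 1, by omega⟩).isLt; omega⟩
  else ⟨c + 1 + (D ⟨i.val - c - 1, by omega⟩).val,
    by have := (D ⟨i.val - c - 1, by omega⟩).isLt; omega⟩

lemma bFun_inj (n c e : ℕ) (hn : n = c + e + 1) (C : Equiv.Perm (Fin c))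
    (D : Equiv.Perm (Fin e)) : Function.Injective (bFun n c e hn C D) := by
  intro a b hab
  unfold bFun at hab
  apply Fin.ext
  by_cases ha0 : a.val = 0 <;> by_cases hb0 : b.val = 0
  · omega
  · rw [dif_pos ha0, dif_neg hb0] at hab
    by_cases hbc : b.val ≤ c
    · rw [dif_pos hbc] at hab
      have := (C ⟨b.val - 1, by omega⟩).isLt
      have := Fin.val_eq_of_eq hab
      simp at this; omega
    · rw [dif_neg hbc] at hab
      have := Fin.val_eq_of_eq hab
      simp at this; omega
  · rw [dif_neg ha0, dif_pos hb0] at hab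
    by_cases hac : a.val ≤ c
    · rw [dif_pos hac] at hab
      have := (C ⟨a.val - 1, by omega⟩).isLt
      have := Fin.val_eq_of_eq hab
      simp at this; omega
    · rw [dif_neg hac] at hab
      have := Fin.val_eq_of_eq hab
      simp at this; omega
  · rw [dif_neg ha0, dif_neg hb0] at hab
    by_cases hac : a.val ≤ c <;> by_cases hbc : b.val ≤ c
    · rw [dif_pos hac, dif_pos hbc] at hab
      have h2 := Fin.val_eq_of_eq hab
      simp only at h2
      have : (⟨a.val - 1, by omega⟩ : Fin c) = ⟨b.val - 1, by omega⟩ :=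
        C.injective (Fin.ext h2)
      have := Fin.val_eq_of_eq this
      simp at this; omega
    · rw [dif_pos hac, dif_neg hbc] at hab
      have := (C ⟨a.val - 1, by omega⟩).isLt
      have := Fin.val_eq_of_eq hab
      simp at this; omega
    · rw [dif_neg hac, dif_pos hbc] at hab
      have := (C ⟨b.val - 1, by omega⟩).isLt
      have := Fin.val_eq_of_eq hab
      simp at this; omega
    · rw [dif_neg hac, dif_neg hbc] at hab
      have h2 := Fin.val_eq_of_eq hab
      simp only at h2
      have : (⟨a.val - c - 1, by omega⟩ : Fin e) = ⟨b.val - c - 1, by omega⟩ :=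
        D.injective (Fin.ext (by omega))
      have := Fin.val_eq_of_eq this
      simp at this; omega

/-- the 231-shape permutation `c · C · (c+1+D)`. -/
noncomputable def buildB (n c e : ℕ) (hn : n = c + e + 1) (C : Equiv.Perm (Fin c)) (D : Equiv.Perm (Fin e)) :
    Equiv.Perm (Fin n) :=
  Equiv.ofBijective _ (Finite.injective_iff_bijective.mp (bFun_inj n c e hn C D))

lemma pv_buildB_zero {n c e : ℕ} (hn : n = c + e + 1) (C : Equiv.Perm (Fin c))
    (D : Equiv.Perm (Fin e)) : pv (buildB n c e hn C D) 0 = c := by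
  rw [pv_eq _ (show 0 < n by omega)]
  simp [buildB, bFun]

lemma pv_buildB_small {n c e : ℕ} (hn : n = c + e + 1) (C : Equiv.Perm (Fin c))
    (D : Equiv.Perm (Fin e)) {i : ℕ} (h1 : 1 ≤ i) (h2 : i ≤ c) :
    pv (buildB n c e hn C D) i = pv C (i - 1) := by
  rw [pv_eq _ (show i < n by omega), pv_eq _ (show i - 1 < c by omega)]
  simp only [buildB, Equiv.ofBijective_apply, bFun]
  rw [dif_neg (by omega), dif_pos h2]

lemma pv_buildB_big {n c e : ℕ} (hn : n = c + e + 1) (C : Equiv.Perm (Fin c))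
    (D : Equiv.Perm (Fin e)) {i : ℕ} (h1 : c < i) (h2 : i < n) :
    pv (buildB n c e hn C D) i = c + 1 + pv D (i - c - 1) := by
  rw [pv_eq _ h2, pv_eq _ (show i - c - 1 < e by omega)]
  simp only [buildB, Equiv.ofBijective_apply, bFun]
  rw [dif_neg (by omega), dif_neg (by omega)]

/-- word `c · (c+1+D) · C` : the 213-shape. -/
def aFun (n e c : ℕ) (hn : n = e + c + 1) (D : Equiv.Perm (Fin e)) (C : Equiv.Perm (Fin c)) :
    Fin n → Fin n := fun i =>
  if h0 : i.val = 0 then ⟨c, by omega⟩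
  else if h : i.val ≤ e then
    ⟨c + 1 + (D ⟨i.val - 1, by omega⟩).val, by have := (D ⟨i.val - 1, by omega⟩).isLt; omega⟩
  else ⟨(C ⟨i.val - e - 1, by omega⟩).val,
    by have := (C ⟨i.val - e - 1, by omega⟩).isLt; omega⟩

lemma aFun_inj (n e c : ℕ) (hn : n = e + c + 1) (D : Equiv.Perm (Fin e))
    (C : Equiv.Perm (Fin c)) : Function.Injective (aFun n e c hn D C) := by
  intro a b hab
  unfold aFun at hab
  apply Fin.ext
  by_cases ha0 : a.val = 0 <;> by_cases hb0 : b.val = 0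
  · omega
  · rw [dif_pos ha0, dif_neg hb0] at hab
    by_cases hbc : b.val ≤ e
    · rw [dif_pos hbc] at hab
      have := Fin.val_eq_of_eq hab
      simp at this; omega
    · rw [dif_neg hbc] at hab
      have := (C ⟨b.val - e - 1, by omega⟩).isLt
      have := Fin.val_eq_of_eq hab
      simp at this; omega
  · rw [dif_neg ha0, dif_pos hb0] at hab
    by_cases hac : a.val ≤ e
    · rw [dif_pos hac] at hab
      have := Fin.val_eq_of_eq hab
      simp at this; omega
    · rw [dif_neg hac] at hab
      have := (C ⟨a.val - e - 1, by omega⟩).isLt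
      have := Fin.val_eq_of_eq hab
      simp at this; omega
  · rw [dif_neg ha0, dif_neg hb0] at hab
    by_cases hac : a.val ≤ e <;> by_cases hbc : b.val ≤ e
    · rw [dif_pos hac, dif_pos hbc] at hab
      have h2 := Fin.val_eq_of_eq hab
      simp only at h2
      have : (⟨a.val - 1, by omega⟩ : Fin e) = ⟨b.val - 1, by omega⟩ :=
        D.injective (Fin.ext (by omega))
      have := Fin.val_eq_of_eq this
      simp at this; omega
    · rw [dif_pos hac, dif_neg hbc] at hab
      have := (C ⟨b.val - e - 1, by omega⟩).isLt
      have := Fin.val_eq_of_eq hab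
      simp at this; omega
    · rw [dif_neg hac, dif_pos hbc] at hab
      have := (C ⟨a.val - e - 1, by omega⟩).isLt
      have := Fin.val_eq_of_eq hab
      simp at this; omega
    · rw [dif_neg hac, dif_neg hbc] at hab
      have h2 := Fin.val_eq_of_eq hab
      simp only at h2
      have : (⟨a.val - e - 1, by omega⟩ : Fin c) = ⟨b.val - e - 1, by omega⟩ :=
        C.injective (Fin.ext h2)
      have := Fin.val_eq_of_eq this
      simp at this; omega

/-- the 213-shape permutation `c · (c+1+D) · C`. -/
noncomputable def buildA (n e c : ℕ) (hn : n = e + c + 1) (D : Equiv.Perm (Fin e)) (C : Equiv.Perm (Fin c)) :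
    Equiv.Perm (Fin n) :=
  Equiv.ofBijective _ (Finite.injective_iff_bijective.mp (aFun_inj n e c hn D C))

lemma pv_buildA_zero {n e c : ℕ} (hn : n = e + c + 1) (D : Equiv.Perm (Fin e))
    (C : Equiv.Perm (Fin c)) : pv (buildA n e c hn D C) 0 = c := by
  rw [pv_eq _ (show 0 < n by omega)]
  simp [buildA, aFun]

lemma pv_buildA_big {n e c : ℕ} (hn : n = e + c + 1) (D : Equiv.Perm (Fin e))
    (C : Equiv.Perm (Fin c)) {i : ℕ} (h1 : 1 ≤ i) (h2 : i ≤ e) :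
    pv (buildA n e c hn D C) i = c + 1 + pv D (i - 1) := by
  rw [pv_eq _ (show i < n by omega), pv_eq _ (show i - 1 < e by omega)]
  simp only [buildA, Equiv.ofBijective_apply, aFun]
  rw [dif_neg (by omega), dif_pos h2]

lemma pv_buildA_small {n e c : ℕ} (hn : n = e + c + 1) (D : Equiv.Perm (Fin e))
    (C : Equiv.Perm (Fin c)) {i : ℕ} (h1 : e < i) (h2 : i < n) :
    pv (buildA n e c hn D C) i = pv C (i - e - 1) := by
  rw [pv_eq _ h2, pv_eq _ (show i - e - 1 < c by omega)]
  simp only [buildA, Equiv.ofBijective_apply, aFun]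
  rw [dif_neg (by omega), dif_neg (by omega)]

-- ## Statistics of the builds

lemma des_buildB_pos {n c e : ℕ} (hn : n = c + e + 1) (C : Equiv.Perm (Fin c))
    (D : Equiv.Perm (Fin e)) (hc : 1 ≤ c) :
    des (buildB n c e hn C D) = des C + des D + 1 := by
  rw [des_eq_pv]
  have hset : ((range (n-1)).filter fun i =>
      pv (buildB n c e hn C D) (i+1) < pv (buildB n c e hn C D) i) =
      insert 0 ((((range (c-1)).filter fun j => pv C (j+1) < pv C j).image (· + 1)) ∪
        (((range (e-1)).filter fun j => pv D (j+1) < pv D j).image (· + (c+1)))) := by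
    ext x
    simp only [mem_filter, mem_range, mem_insert, mem_union, mem_image]
    constructor
    · rintro ⟨hx, hlt⟩
      rcases Nat.lt_or_ge x 1 with h0 | h1
      · left; omega
      rcases Nat.lt_or_ge x c with hxc | hxc
      · right; left
        refine ⟨x-1, ⟨by omega, ?_⟩, by omega⟩
        rw [pv_buildB_small hn C D (by omega) (by omega),
            pv_buildB_small hn C D (by omega) (by omega)] at hlt
        have e1 : x + 1 - 1 = (x-1) + 1 := by omega
        have e2 : x - 1 = x - 1 := rfl
        rw [e1] at hlt
        exact hlt
      rcases Nat.eq_or_lt_of_le hxc with hxc' | hxc'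
      · exfalso
        rw [pv_buildB_big hn C D (by omega) (by omega),
            pv_buildB_small hn C D (by omega) (by omega)] at hlt
        have := pv_lt C (show x - 1 < c by omega)
        omega
      · right; right
        refine ⟨x - (c+1), ⟨by omega, ?_⟩, by omega⟩
        rw [pv_buildB_big hn C D (by omega) (by omega),
            pv_buildB_big hn C D (by omega) (by omega)] at hlt
        have e1 : x + 1 - c - 1 = (x - (c+1)) + 1 := by omega
        have e2 : x - c - 1 = x - (c+1) := by omega
        rw [e1, e2] at hlt
        omega
    · rintro (rfl | ⟨j, ⟨hj, hlt⟩, rfl⟩ | ⟨j, ⟨hj, hlt⟩, rfl⟩)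
      · refine ⟨by omega, ?_⟩
        rw [pv_buildB_small hn C D (by omega) (by omega), pv_buildB_zero]
        have := pv_lt C (show 0 + 1 - 1 < c by omega)
        omega
      · refine ⟨by omega, ?_⟩
        rw [pv_buildB_small hn C D (by omega) (by omega),
            pv_buildB_small hn C D (by omega) (by omega)]
        have e1 : j + 1 + 1 - 1 = j + 1 := by omega
        have e2 : j + 1 - 1 = j := by omega
        rw [e1, e2]
        exact hlt
      · refine ⟨by omega, ?_⟩
        rw [pv_buildB_big hn C D (by omega) (by omega),
            pv_buildB_big hn C D (by omega) (by omega)]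
        have e1 : j + (c+1) + 1 - c - 1 = j + 1 := by omega
        have e2 : j + (c+1) - c - 1 = j := by omega
        rw [e1, e2]
        omega
  have hdisj : Disjoint
      (((range (c-1)).filter fun j => pv C (j+1) < pv C j).image (· + 1))
      (((range (e-1)).filter fun j => pv D (j+1) < pv D j).image (· + (c+1))) := by
    rw [Finset.disjoint_left]
    rintro a ha hb
    simp only [mem_image, mem_filter, mem_range] at ha hb
    obtain ⟨j, ⟨hj, _⟩, rfl⟩ := ha
    obtain ⟨j', ⟨hj', _⟩, hjj⟩ := hb
    omega
  have h0 : 0 ∉ ((((range (c-1)).filter fun j => pv C (j+1) < pv C j).image (· + 1)) ∪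
        (((range (e-1)).filter fun j => pv D (j+1) < pv D j).image (· + (c+1)))) := by
    simp only [mem_union, mem_image, mem_filter, mem_range]
    rintro (⟨j, _, hj⟩ | ⟨j, _, hj⟩) <;> omega
  rw [hset, Finset.card_insert_of_notMem h0, Finset.card_union_of_disjoint hdisj,
      Finset.card_image_of_injective _ (fun a b h => by simpa using h : Function.Injective (· + 1)),
      Finset.card_image_of_injective _ (fun a b h => by simpa using h :
        Function.Injective (· + (c+1))), ← des_eq_pv, ← des_eq_pv]

lemma des_buildB_zero {n e : ℕ} (hn : n = 0 + e + 1) (C : Equiv.Perm (Fin 0))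
    (D : Equiv.Perm (Fin e)) :
    des (buildB n 0 e hn C D) = des D := by
  rw [des_eq_pv, des_eq_pv]
  apply Finset.card_nbij' (fun i => i - 1) (fun j => j + 1)
  · intro x hx
    simp only [Finset.mem_coe, mem_filter, mem_range] at hx ⊢
    obtain ⟨hx, hlt⟩ := hx
    have hx1 : 1 ≤ x := by
      by_contra h0
      rw [show x = 0 by omega] at hlt
      rw [pv_buildB_big hn C D (by omega) (by omega), pv_buildB_zero] at hlt
      omega
    rw [pv_buildB_big hn C D (by omega) (by omega),
        pv_buildB_big hn C D (by omega) (by omega)] at hlt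
    have e1 : x + 1 - 0 - 1 = (x - 1) + 1 := by omega
    have e2 : x - 0 - 1 = x - 1 := by omega
    rw [e1, e2] at hlt
    exact ⟨by omega, by omega⟩
  · intro j hj
    simp only [Finset.mem_coe, mem_filter, mem_range] at hj ⊢
    obtain ⟨hj, hlt⟩ := hj
    refine ⟨by omega, ?_⟩
    rw [pv_buildB_big hn C D (by omega) (by omega),
        pv_buildB_big hn C D (by omega) (by omega)]
    have e1 : j + 1 + 1 - 0 - 1 = j + 1 := by omega
    have e2 : j + 1 - 0 - 1 = j := by omega
    rw [e1, e2]
    omega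
  · intro x hx
    simp only [Finset.mem_coe, mem_filter, mem_range] at hx
    obtain ⟨hx, hlt⟩ := hx
    have hx1 : 1 ≤ x := by
      by_contra h0
      rw [show x = 0 by omega] at hlt
      rw [pv_buildB_big hn C D (by omega) (by omega), pv_buildB_zero] at hlt
      omega
    dsimp only; omega
  · intro j _; dsimp only; omega

lemma des_buildA_pos {n e c : ℕ} (hn : n = e + c + 1) (D : Equiv.Perm (Fin e))
    (C : Equiv.Perm (Fin c)) (hc : 1 ≤ c) :
    des (buildA n e c hn D C) = des D + des C + 1 := by
  rw [des_eq_pv]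
  have hset : ((range (n-1)).filter fun i =>
      pv (buildA n e c hn D C) (i+1) < pv (buildA n e c hn D C) i) =
      insert e ((((range (e-1)).filter fun j => pv D (j+1) < pv D j).image (· + 1)) ∪
        (((range (c-1)).filter fun j => pv C (j+1) < pv C j).image (· + (e+1)))) := by
    ext x
    simp only [mem_filter, mem_range, mem_insert, mem_union, mem_image]
    constructor
    · rintro ⟨hx, hlt⟩
      rcases Nat.lt_or_ge x 1 with h0 | h1
      · -- x = 0 : descent iff e = 0, in which case x = e
        left
        rcases Nat.eq_zero_or_pos e with he | he
        · omega
        · exfalso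
          rw [show x = 0 by omega] at hlt
          rw [pv_buildA_big hn D C (by omega) (by omega), pv_buildA_zero] at hlt
          omega
      rcases Nat.lt_or_ge x e with hxe | hxe
      · right; left
        refine ⟨x-1, ⟨by omega, ?_⟩, by omega⟩
        rw [pv_buildA_big hn D C (by omega) (by omega),
            pv_buildA_big hn D C (by omega) (by omega)] at hlt
        have e1 : x + 1 - 1 = (x-1) + 1 := by omega
        rw [e1] at hlt
        omega
      rcases Nat.eq_or_lt_of_le hxe with hxe' | hxe'
      · left; omega
      · right; right
        refine ⟨x - (e+1), ⟨by omega, ?_⟩, by omega⟩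
        rw [pv_buildA_small hn D C (by omega) (by omega),
            pv_buildA_small hn D C (by omega) (by omega)] at hlt
        have e1 : x + 1 - e - 1 = (x - (e+1)) + 1 := by omega
        have e2 : x - e - 1 = x - (e+1) := by omega
        rw [e1, e2] at hlt
        exact hlt
    · rintro (hxe | ⟨j, ⟨hj, hlt⟩, rfl⟩ | ⟨j, ⟨hj, hlt⟩, rfl⟩)
      · refine ⟨by omega, ?_⟩
        rw [hxe]
        rw [pv_buildA_small hn D C (by omega) (by omega)]
        have h1 := pv_lt C (show e + 1 - e - 1 < c by omega)
        rcases Nat.eq_zero_or_pos e with he | he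
        · have h2 : pv (buildA n e c hn D C) e = c := by
            subst he; exact pv_buildA_zero hn D C
          omega
        · rw [pv_buildA_big hn D C (by omega) (by omega)]
          omega
      · refine ⟨by omega, ?_⟩
        rw [pv_buildA_big hn D C (by omega) (by omega),
            pv_buildA_big hn D C (by omega) (by omega)]
        have e1 : j + 1 + 1 - 1 = j + 1 := by omega
        have e2 : j + 1 - 1 = j := by omega
        rw [e1, e2]
        omega
      · refine ⟨by omega, ?_⟩
        rw [pv_buildA_small hn D C (by omega) (by omega),
            pv_buildA_small hn D C (by omega) (by omega)]
        have e1 : j + (e+1) + 1 - e - 1 = j + 1 := by omega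
        have e2 : j + (e+1) - e - 1 = j := by omega
        rw [e1, e2]
        exact hlt
  have hdisj : Disjoint
      (((range (e-1)).filter fun j => pv D (j+1) < pv D j).image (· + 1))
      (((range (c-1)).filter fun j => pv C (j+1) < pv C j).image (· + (e+1))) := by
    rw [Finset.disjoint_left]
    rintro a ha hb
    simp only [mem_image, mem_filter, mem_range] at ha hb
    obtain ⟨j, ⟨hj, _⟩, rfl⟩ := ha
    obtain ⟨j', ⟨hj', _⟩, hjj⟩ := hb
    omega
  have h0 : e ∉ ((((range (e-1)).filter fun j => pv D (j+1) < pv D j).image (· + 1)) ∪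
        (((range (c-1)).filter fun j => pv C (j+1) < pv C j).image (· + (e+1)))) := by
    simp only [mem_union, mem_image, mem_filter, mem_range]
    rintro (⟨j, ⟨hj, _⟩, hje⟩ | ⟨j, ⟨hj, _⟩, hje⟩) <;> omega
  rw [hset, Finset.card_insert_of_notMem h0, Finset.card_union_of_disjoint hdisj,
      Finset.card_image_of_injective _ (fun a b h => by simpa using h : Function.Injective (· + 1)),
      Finset.card_image_of_injective _ (fun a b h => by simpa using h :
        Function.Injective (· + (e+1))), ← des_eq_pv, ← des_eq_pv]

-- ## iar and comps of the builds

lemma iar_mem_spec {n : ℕ} (π : Equiv.Perm (Fin n)) :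
    iar π = n ∨ (0 < iar π ∧ iar π < n ∧ pv π (iar π) < pv π (iar π - 1)) := by
  have h := Nat.sInf_mem (s := {k : ℕ | k = n ∨ (0 < k ∧ k < n ∧ pv π k < pv π (k-1))})
    ⟨n, Or.inl rfl⟩
  rw [← iar_eq_pv] at h
  simpa using h

lemma iar_min {n : ℕ} (π : Equiv.Perm (Fin n)) {m : ℕ} (hm : m < iar π) :
    ¬(m = n ∨ (0 < m ∧ m < n ∧ pv π m < pv π (m-1))) := by
  rw [iar_eq_pv] at hm
  simpa using Nat.notMem_of_lt_sInf hm

lemma iar_eq_of {n : ℕ} (π : Equiv.Perm (Fin n)) {a : ℕ}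
    (ha : a = n ∨ (0 < a ∧ a < n ∧ pv π a < pv π (a-1)))
    (hmin : ∀ m < a, ¬(m = n ∨ (0 < m ∧ m < n ∧ pv π m < pv π (m-1)))) : iar π = a := by
  rw [iar_eq_pv]
  exact sInf_eq_of_forall ha hmin

lemma iar_buildB_pos {n c e : ℕ} (hn : n = c + e + 1) (C : Equiv.Perm (Fin c))
    (D : Equiv.Perm (Fin e)) (hc : 1 ≤ c) : iar (buildB n c e hn C D) = 1 := by
  apply iar_eq_of
  · refine Or.inr ⟨by omega, by omega, ?_⟩
    rw [pv_buildB_small hn C D (by omega) (by omega), pv_buildB_zero]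
    have := pv_lt C (show 1 - 1 < c by omega)
    omega
  · intro m hm
    rintro (h | ⟨h1, _⟩) <;> omega

lemma iar_buildB_zero {n e : ℕ} (hn : n = 0 + e + 1) (C : Equiv.Perm (Fin 0))
    (D : Equiv.Perm (Fin e)) : iar (buildB n 0 e hn C D) = iar D + 1 := by
  have hle := iar_le D
  apply iar_eq_of
  · rcases iar_mem_spec D with h | ⟨h1, h2, h3⟩
    · left; omega
    · refine Or.inr ⟨by omega, by omega, ?_⟩
      rw [pv_buildB_big hn C D (by omega) (by omega),
          pv_buildB_big hn C D (by omega) (by omega)]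
      have e1 : iar D + 1 - 0 - 1 = iar D := by omega
      have e2 : iar D + 1 - 1 - 0 - 1 = iar D - 1 := by omega
      rw [e1, e2]
      omega
  · intro m hm
    rintro (h | ⟨h1, h2, h3⟩)
    · omega
    · rcases Nat.lt_or_ge m 2 with hm2 | hm2
      · have hm1 : m = 1 := by omega
        rw [hm1] at h3
        rw [pv_buildB_big hn C D (by omega) (by omega), pv_buildB_zero] at h3
        omega
      · rw [pv_buildB_big hn C D (by omega) (by omega),
            pv_buildB_big hn C D (by omega) (by omega)] at h3
        refine iar_min D (show m - 1 < iar D by omega) (Or.inr ⟨by omega, by omega, ?_⟩)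
        have e1 : m - 0 - 1 = m - 1 := by omega
        have e2 : m - 1 - 0 - 1 = m - 1 - 1 := by omega
        rw [e1, e2] at h3
        omega

lemma iar_buildA {n e c : ℕ} (hn : n = e + c + 1) (D : Equiv.Perm (Fin e))
    (C : Equiv.Perm (Fin c)) (hc : 1 ≤ c) : iar (buildA n e c hn D C) = iar D + 1 := by
  have hle := iar_le D
  apply iar_eq_of
  · refine Or.inr ⟨by omega, by omega, ?_⟩
    have e0 : iar D + 1 - 1 = iar D := by omega
    rw [e0]
    rcases iar_mem_spec D with h | ⟨h1, h2, h3⟩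
    · -- iar D = e : junction descent
      rw [pv_buildA_small hn D C (by omega) (by omega)]
      have hC := pv_lt C (show iar D + 1 - e - 1 < c by omega)
      rcases Nat.eq_zero_or_pos e with he | he
      · have h2 : pv (buildA n e c hn D C) (iar D) = c := by
          rw [show iar D = 0 by omega]
          exact pv_buildA_zero hn D C
        omega
      · rw [pv_buildA_big hn D C (by omega) (by omega)]
        omega
    · rw [pv_buildA_big hn D C (by omega) (by omega),
          pv_buildA_big hn D C (by omega) (by omega)]
      have e1 : iar D + 1 - 1 = iar D := by omega
      rw [e1]
      omega
  · intro m hm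
    rintro (h | ⟨h1, h2, h3⟩)
    · omega
    · rcases Nat.lt_or_ge m 2 with hm2 | hm2
      · have hm1 : m = 1 := by omega
        have he1 : 1 ≤ e := by omega
        rw [hm1] at h3
        rw [pv_buildA_big hn D C (by omega) (by omega), pv_buildA_zero] at h3
        omega
      · rw [pv_buildA_big hn D C (by omega) (by omega),
            pv_buildA_big hn D C (by omega) (by omega)] at h3
        refine iar_min D (show m - 1 < iar D by omega) (Or.inr ⟨by omega, by omega, ?_⟩)
        omega

lemma comps_buildB {n c e : ℕ} (hn : n = c + e + 1) (C : Equiv.Perm (Fin c))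
    (D : Equiv.Perm (Fin e)) : comps (buildB n c e hn C D) = comps D + 1 := by
  rw [comps_eq_pv]
  have hset : ((range n).filter fun i => ∀ j ≤ i, pv (buildB n c e hn C D) j ≤ i) =
      insert c (((range e).filter fun i => ∀ j ≤ i, pv D j ≤ i).image (· + (c+1))) := by
    ext x
    simp only [mem_filter, mem_range, mem_insert, mem_image]
    constructor
    · rintro ⟨hx, hcl⟩
      have hc0 := hcl 0 (by omega)
      rw [pv_buildB_zero] at hc0
      rcases Nat.eq_or_lt_of_le hc0 with h | h
      · left; omega
      · right
        refine ⟨x - (c+1), ⟨by omega, fun j hj => ?_⟩, by omega⟩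
        have := hcl (c+1+j) (by omega)
        rw [pv_buildB_big hn C D (by omega) (by omega)] at this
        have e1 : c + 1 + j - c - 1 = j := by omega
        rw [e1] at this
        omega
    · rintro (hxc | ⟨j', ⟨hj', hcl⟩, rfl⟩)
      · refine ⟨by omega, fun j hj => ?_⟩
        rcases Nat.eq_zero_or_pos j with rfl | hj1
        · rw [pv_buildB_zero]; omega
        · rw [pv_buildB_small hn C D (by omega) (by omega)]
          have := pv_lt C (show j - 1 < c by omega)
          omega
      · refine ⟨by omega, fun j hj => ?_⟩
        rcases Nat.eq_zero_or_pos j with rfl | hj1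
        · rw [pv_buildB_zero]; omega
        · by_cases hjc : j ≤ c
          · rw [pv_buildB_small hn C D (by omega) (by omega)]
            have := pv_lt C (show j - 1 < c by omega)
            omega
          · rw [pv_buildB_big hn C D (by omega) (by omega)]
            have := hcl (j - c - 1) (by omega)
            omega
  rw [hset, Finset.card_insert_of_notMem, Finset.card_image_of_injective _
      (fun a b h => by simpa using h : Function.Injective (· + (c+1))), ← comps_eq_pv]
  simp only [mem_image, mem_filter, mem_range]
  rintro ⟨j, _, hj⟩
  omega

/-- existence form of prefix-closure surjectivity. -/
lemma closure_surj {n : ℕ} (π : Equiv.Perm (Fin n)) {i v : ℕ}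
    (h : ∀ j ≤ i, pv π j ≤ i) (hv : v ≤ i) (hvn : v < n) : ∃ j ≤ i, pv π j = v := by
  classical
  set s : Finset (Fin n) := univ.filter (fun j => (j : ℕ) ≤ i) with hs
  have hsub : s.image π ⊆ s := by
    intro y hy
    simp only [hs, mem_image, mem_filter, mem_univ, true_and] at hy ⊢
    obtain ⟨j, hj, rfl⟩ := hy
    have := h j.val hj
    rw [pv_eq π j.isLt] at this
    simpa [Fin.eta] using this
  have hcard : s.card ≤ (s.image π).card := by
    rw [Finset.card_image_of_injective _ π.injective]
  have heq : s.image π = s := Finset.eq_of_subset_of_card_le hsub hcard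
  have hv' : (⟨v, hvn⟩ : Fin n) ∈ s := by simp [hs]; omega
  rw [← heq] at hv'
  simp only [mem_image, hs, mem_filter, mem_univ, true_and] at hv'
  obtain ⟨j, hj, hπj⟩ := hv'
  refine ⟨j.val, hj, ?_⟩
  rw [pv_eq π j.isLt]
  simp [Fin.eta, hπj]

lemma comps_buildA {n e c : ℕ} (hn : n = e + c + 1) (D : Equiv.Perm (Fin e))
    (C : Equiv.Perm (Fin c)) (hc : 1 ≤ c) : comps (buildA n e c hn D C) = 1 := by
  rw [comps_eq_pv]
  have hset : ((range n).filter fun i => ∀ j ≤ i, pv (buildA n e c hn D C) j ≤ i) =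
      {n - 1} := by
    ext x
    simp only [mem_filter, mem_range, mem_singleton]
    constructor
    · rintro ⟨hx, hcl⟩
      have hc0 := hcl 0 (by omega)
      rw [pv_buildA_zero] at hc0
      -- position of value 0 is in the C-block, hence x ≥ e + 1
      obtain ⟨j, hj, hj0⟩ := closure_surj _ hcl (show 0 ≤ x by omega) (show 0 < n by omega)
      have hje : e + 1 ≤ j := by
        by_contra hje
        rcases Nat.eq_zero_or_pos j with rfl | hj1
        · rw [pv_buildA_zero] at hj0; omega
        · rw [pv_buildA_big hn D C (by omega) (by omega)] at hj0; omega
      rcases Nat.eq_zero_or_pos e with he | he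
      · omega
      · -- the maximum n-1 sits in the D-block at position ≤ e ≤ x
        set p : ℕ := 1 + (D.symm ⟨e - 1, by omega⟩).val with hp
        have hpe : p ≤ e := by
          have := (D.symm ⟨e - 1, by omega⟩).isLt
          omega
        have hpv : pv (buildA n e c hn D C) p = n - 1 := by
          rw [pv_buildA_big hn D C (by omega) (by omega)]
          have e1 : p - 1 = (D.symm ⟨e - 1, by omega⟩).val := by omega
          rw [e1, pv_eq D (D.symm ⟨e - 1, by omega⟩).isLt]
          simp [Fin.eta]
          omega
        have := hcl p (by omega)
        omega
    · rintro rfl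
      refine ⟨by omega, fun j hj => ?_⟩
      have := pv_lt (buildA n e c hn D C) (show j < n by omega)
      omega
  rw [hset]
  simp

-- ## Avoidance transfer

lemma pv_val {n : ℕ} (π : Equiv.Perm (Fin n)) (i : Fin n) : pv π (i : ℕ) = (π i : ℕ) :=
  dif_pos i.isLt

lemma contains213_pv {n : ℕ} (π : Equiv.Perm (Fin n)) :
    ContainsPat π pat213 ↔ ∃ i j k : ℕ, i < j ∧ j < k ∧ k < n ∧
      pv π j < pv π i ∧ pv π i < pv π k := by
  rw [contains213_iff]
  constructor
  · rintro ⟨i, j, k, hij, hjk, h1, h2⟩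
    refine ⟨i.val, j.val, k.val, hij, hjk, k.isLt, ?_, ?_⟩ <;>
      rw [pv_val, pv_val] <;> exact Fin.lt_def.mp (by assumption)
  · rintro ⟨i, j, k, hij, hjk, hk, h1, h2⟩
    refine ⟨⟨i, by omega⟩, ⟨j, by omega⟩, ⟨k, hk⟩, by simpa [Fin.lt_def] using hij,
      by simpa [Fin.lt_def] using hjk, ?_, ?_⟩ <;>
      rw [Fin.lt_def] <;> rw [← pv_val, ← pv_val] <;> assumption

lemma contains231_pv {n : ℕ} (π : Equiv.Perm (Fin n)) :
    ContainsPat π pat231 ↔ ∃ i j k : ℕ, i < j ∧ j < k ∧ k < n ∧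
      pv π k < pv π i ∧ pv π i < pv π j := by
  rw [contains231_iff]
  constructor
  · rintro ⟨i, j, k, hij, hjk, h1, h2⟩
    refine ⟨i.val, j.val, k.val, hij, hjk, k.isLt, ?_, ?_⟩ <;>
      rw [pv_val, pv_val] <;> exact Fin.lt_def.mp (by assumption)
  · rintro ⟨i, j, k, hij, hjk, hk, h1, h2⟩
    refine ⟨⟨i, by omega⟩, ⟨j, by omega⟩, ⟨k, hk⟩, by simpa [Fin.lt_def] using hij,
      by simpa [Fin.lt_def] using hjk, ?_, ?_⟩ <;>
      rw [Fin.lt_def] <;> rw [← pv_val, ← pv_val] <;> assumption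

lemma avoids_perm_zero {m : ℕ} (C : Equiv.Perm (Fin 0)) (σ3 : Equiv.Perm (Fin (m+1))) :
    AvoidsPat C σ3 := by
  rintro ⟨g, _, _⟩
  exact (g 0).elim0

lemma contains231_buildB {n c e : ℕ} (hn : n = c + e + 1) (C : Equiv.Perm (Fin c))
    (D : Equiv.Perm (Fin e)) :
    ContainsPat (buildB n c e hn C D) pat231 ↔
      ContainsPat C pat231 ∨ ContainsPat D pat231 := by
  rw [contains231_pv, contains231_pv, contains231_pv]
  constructor
  · rintro ⟨i, j, k, hij, hjk, hk, h1, h2⟩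
    rcases Nat.eq_zero_or_pos i with rfl | hi
    · exfalso
      rw [pv_buildB_zero] at h1 h2
      by_cases hjc : j ≤ c
      · rw [pv_buildB_small (i := j) hn C D (by omega) (by omega)] at h2
        have := pv_lt C (show j - 1 < c by omega)
        omega
      · rw [pv_buildB_big (i := k) hn C D (by omega) (by omega)] at h1
        omega
    by_cases hic : i ≤ c
    · left
      rw [pv_buildB_small (i := i) hn C D (by omega) (by omega)] at h1 h2
      have hvi := pv_lt C (show i - 1 < c by omega)
      have hkc : k ≤ c := by
        by_contra hkc
        rw [pv_buildB_big (i := k) hn C D (by omega) (by omega)] at h1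
        omega
      rw [pv_buildB_small (i := k) hn C D (by omega) (by omega)] at h1
      rw [pv_buildB_small (i := j) hn C D (by omega) (by omega)] at h2
      exact ⟨i - 1, j - 1, k - 1, by omega, by omega, by omega, h1, h2⟩
    · right
      rw [pv_buildB_big (i := i) hn C D (by omega) (by omega)] at h1 h2
      have hjc : ¬ (j ≤ c) := by omega
      have hkc : ¬ (k ≤ c) := by omega
      rw [pv_buildB_big (i := k) hn C D (by omega) (by omega)] at h1
      rw [pv_buildB_big (i := j) hn C D (by omega) (by omega)] at h2
      exact ⟨i - c - 1, j - c - 1, k - c - 1, by omega, by omega, by omega,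
        by omega, by omega⟩
  · rintro (⟨i, j, k, hij, hjk, hk, h1, h2⟩ | ⟨i, j, k, hij, hjk, hk, h1, h2⟩)
    · refine ⟨i + 1, j + 1, k + 1, by omega, by omega, by omega, ?_, ?_⟩
      · rw [pv_buildB_small (i := k+1) hn C D (by omega) (by omega),
            pv_buildB_small (i := i+1) hn C D (by omega) (by omega)]
        have e1 : ∀ t : ℕ, t + 1 - 1 = t := fun t => by omega
        rw [e1, e1]; exact h1
      · rw [pv_buildB_small (i := i+1) hn C D (by omega) (by omega),
            pv_buildB_small (i := j+1) hn C D (by omega) (by omega)]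
        have e1 : ∀ t : ℕ, t + 1 - 1 = t := fun t => by omega
        rw [e1, e1]; exact h2
    · refine ⟨i + c + 1, j + c + 1, k + c + 1, by omega, by omega, by omega, ?_, ?_⟩
      · rw [pv_buildB_big (i := k+c+1) hn C D (by omega) (by omega),
            pv_buildB_big (i := i+c+1) hn C D (by omega) (by omega)]
        have e1 : ∀ t : ℕ, t + c + 1 - c - 1 = t := fun t => by omega
        rw [e1, e1]; omega
      · rw [pv_buildB_big (i := i+c+1) hn C D (by omega) (by omega),
            pv_buildB_big (i := j+c+1) hn C D (by omega) (by omega)]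
        have e1 : ∀ t : ℕ, t + c + 1 - c - 1 = t := fun t => by omega
        rw [e1, e1]; omega

lemma contains213_buildA {n e c : ℕ} (hn : n = e + c + 1) (D : Equiv.Perm (Fin e))
    (C : Equiv.Perm (Fin c)) :
    ContainsPat (buildA n e c hn D C) pat213 ↔
      ContainsPat D pat213 ∨ ContainsPat C pat213 := by
  rw [contains213_pv, contains213_pv, contains213_pv]
  constructor
  · rintro ⟨i, j, k, hij, hjk, hk, h1, h2⟩
    rcases Nat.eq_zero_or_pos i with rfl | hi
    · exfalso
      rw [pv_buildA_zero] at h1 h2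
      by_cases hje : j ≤ e
      · rw [pv_buildA_big (i := j) hn D C (by omega) (by omega)] at h1
        omega
      · by_cases hke : k ≤ e
        · omega
        · rw [pv_buildA_small (i := k) hn D C (by omega) (by omega)] at h2
          have := pv_lt C (show k - e - 1 < c by omega)
          omega
    by_cases hie : i ≤ e
    · left
      rw [pv_buildA_big (i := i) hn D C (by omega) (by omega)] at h1 h2
      have hke : k ≤ e := by
        by_contra hke
        rw [pv_buildA_small (i := k) hn D C (by omega) (by omega)] at h2
        have := pv_lt C (show k - e - 1 < c by omega)
        omega
      have hje : j ≤ e := by omega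
      rw [pv_buildA_big (i := j) hn D C (by omega) (by omega)] at h1
      rw [pv_buildA_big (i := k) hn D C (by omega) (by omega)] at h2
      exact ⟨i - 1, j - 1, k - 1, by omega, by omega, by omega, by omega, by omega⟩
    · right
      rw [pv_buildA_small (i := i) hn D C (by omega) (by omega)] at h1 h2
      rw [pv_buildA_small (i := j) hn D C (by omega) (by omega)] at h1
      rw [pv_buildA_small (i := k) hn D C (by omega) (by omega)] at h2
      exact ⟨i - e - 1, j - e - 1, k - e - 1, by omega, by omega, by omega, h1, h2⟩
  · rintro (⟨i, j, k, hij, hjk, hk, h1, h2⟩ | ⟨i, j, k, hij, hjk, hk, h1, h2⟩)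
    · refine ⟨i + 1, j + 1, k + 1, by omega, by omega, by omega, ?_, ?_⟩
      · rw [pv_buildA_big (i := j+1) hn D C (by omega) (by omega),
            pv_buildA_big (i := i+1) hn D C (by omega) (by omega)]
        have e1 : ∀ t : ℕ, t + 1 - 1 = t := fun t => by omega
        rw [e1, e1]; omega
      · rw [pv_buildA_big (i := i+1) hn D C (by omega) (by omega),
            pv_buildA_big (i := k+1) hn D C (by omega) (by omega)]
        have e1 : ∀ t : ℕ, t + 1 - 1 = t := fun t => by omega
        rw [e1, e1]; omega
    · refine ⟨i + e + 1, j + e + 1, k + e + 1, by omega, by omega, by omega, ?_, ?_⟩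
      · rw [pv_buildA_small (i := j+e+1) hn D C (by omega) (by omega),
            pv_buildA_small (i := i+e+1) hn D C (by omega) (by omega)]
        have e1 : ∀ t : ℕ, t + e + 1 - e - 1 = t := fun t => by omega
        rw [e1, e1]; exact h1
      · rw [pv_buildA_small (i := i+e+1) hn D C (by omega) (by omega),
            pv_buildA_small (i := k+e+1) hn D C (by omega) (by omega)]
        have e1 : ∀ t : ℕ, t + e + 1 - e - 1 = t := fun t => by omega
        rw [e1, e1]; exact h2

lemma contains213_buildB_zero {n e : ℕ} (hn : n = 0 + e + 1) (C : Equiv.Perm (Fin 0))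
    (D : Equiv.Perm (Fin e)) :
    ContainsPat (buildB n 0 e hn C D) pat213 ↔ ContainsPat D pat213 := by
  rw [contains213_pv, contains213_pv]
  constructor
  · rintro ⟨i, j, k, hij, hjk, hk, h1, h2⟩
    rcases Nat.eq_zero_or_pos i with rfl | hi
    · exfalso
      rw [pv_buildB_zero] at h1
      omega
    rw [pv_buildB_big (i := i) hn C D (by omega) (by omega)] at h1 h2
    rw [pv_buildB_big (i := j) hn C D (by omega) (by omega)] at h1
    rw [pv_buildB_big (i := k) hn C D (by omega) (by omega)] at h2
    have e1 : ∀ t : ℕ, t - 0 - 1 = t - 1 := fun t => by omega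
    rw [e1, e1] at h1
    rw [e1, e1] at h2
    exact ⟨i - 1, j - 1, k - 1, by omega, by omega, by omega, by omega, by omega⟩
  · rintro ⟨i, j, k, hij, hjk, hk, h1, h2⟩
    refine ⟨i + 1, j + 1, k + 1, by omega, by omega, by omega, ?_, ?_⟩
    · rw [pv_buildB_big (i := j+1) hn C D (by omega) (by omega),
          pv_buildB_big (i := i+1) hn C D (by omega) (by omega)]
      have e1 : ∀ t : ℕ, t + 1 - 0 - 1 = t := fun t => by omega
      rw [e1, e1]; omega
    · rw [pv_buildB_big (i := i+1) hn C D (by omega) (by omega),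
          pv_buildB_big (i := k+1) hn C D (by omega) (by omega)]
      have e1 : ∀ t : ℕ, t + 1 - 0 - 1 = t := fun t => by omega
      rw [e1, e1]; omega

-- ## Structure lemmas (surjectivity of the builds)

lemma perm_eq_of_pv {n : ℕ} (π σ : Equiv.Perm (Fin n)) (h : ∀ i < n, pv π i = pv σ i) :
    π = σ := by
  apply Equiv.ext
  intro i
  apply Fin.ext
  rw [← pv_val, ← pv_val]
  exact h i.val i.isLt

lemma surjB_zero {n e : ℕ} (hn : n = 0 + e + 1) (π : Equiv.Perm (Fin n))
    (h0 : pv π 0 = 0) :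
    ∃ D : Equiv.Perm (Fin e), π = buildB n 0 e hn 1 D := by
  have key : ∀ j : ℕ, 1 ≤ j → j < n → 1 ≤ pv π j ∧ pv π j < n := by
    intro j h1 h2
    refine ⟨?_, pv_lt π h2⟩
    by_contra h
    have : pv π j = pv π 0 := by omega
    have := pv_inj π h2 (by omega) this
    omega
  have hf : ∀ j : Fin e, pv π (j.val + 1) - 1 < e := by
    intro j
    have := key (j.val + 1) (by omega) (by omega)
    omega
  set f : Fin e → Fin e := fun j => ⟨pv π (j.val + 1) - 1, hf j⟩ with hfdef
  have finj : Function.Injective f := by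
    intro a b hab
    have h1 := key (a.val + 1) (by omega) (by omega)
    have h2 := key (b.val + 1) (by omega) (by omega)
    have := Fin.val_eq_of_eq hab
    simp only [hfdef] at this
    have := pv_inj π (show a.val + 1 < n by omega) (show b.val + 1 < n by omega)
      (by omega)
    exact Fin.ext (by omega)
  refine ⟨Equiv.ofBijective f (Finite.injective_iff_bijective.mp finj), ?_⟩
  apply perm_eq_of_pv
  intro i hi
  rcases Nat.eq_zero_or_pos i with rfl | hi1
  · rw [pv_buildB_zero, h0]
  · rw [pv_buildB_big (i := i) hn _ _ (by omega) hi]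
    have hDval : pv (Equiv.ofBijective f (Finite.injective_iff_bijective.mp finj))
        (i - 0 - 1) = pv π ((i - 0 - 1) + 1) - 1 := by
      rw [pv_eq _ (show i - 0 - 1 < e by omega)]
      rfl
    rw [hDval]
    have := key i (by omega) hi
    have e1 : i - 0 - 1 + 1 = i := by omega
    rw [e1]
    omega

lemma surjA {n e c : ℕ} (hn : n = e + c + 1) (hc : 1 ≤ c) (π : Equiv.Perm (Fin n))
    (hav : AvoidsPat π pat213) (h0 : pv π 0 = c) :
    ∃ (D : Equiv.Perm (Fin e)) (C : Equiv.Perm (Fin c)), π = buildA n e c hn D C := by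
  have hne : ∀ i : ℕ, 1 ≤ i → i < n → pv π i ≠ c := by
    intro i h1 h2 h
    have := pv_inj π h2 (by omega) (h.trans h0.symm)
    omega
  have hK : ∀ i j : ℕ, 1 ≤ i → i < j → j < n → pv π i < c → pv π j < c := by
    intro i j h1 h2 h3 hsmall
    by_contra hbig
    have hbig' : c < pv π j := by have := hne j (by omega) h3; omega
    apply hav
    rw [contains213_pv]
    exact ⟨0, i, j, by omega, h2, h3, by omega, by omega⟩
  have hbigpos : ∀ i : ℕ, 1 ≤ i → i ≤ e → c < pv π i := by
    intro i hi1 hie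
    by_contra hle
    have hsm : ∀ j, i ≤ j → j < n → pv π j < c := by
      intro j hj hjn
      rcases Nat.eq_or_lt_of_le hj with heq | hlt
      · rw [← heq]; have := hne i (by omega) (by omega); omega
      · exact hK i j hi1 hlt hjn (by have := hne i (by omega) (by omega); omega)
    have hcard : (Finset.Ico i n).card ≤ (range c).card := by
      apply Finset.card_le_card_of_injOn (pv π)
      · intro a ha
        simp only [Finset.mem_coe, Finset.mem_Ico] at ha
        simp only [Finset.mem_coe, mem_range]
        exact hsm a ha.1 ha.2
      · intro a ha b hb hab
        simp only [Finset.coe_Ico, Set.mem_Ico] at ha hb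
        exact pv_inj π ha.2 hb.2 hab
    simp only [Nat.card_Ico, Finset.card_range] at hcard
    omega
  have hsmallpos : ∀ i : ℕ, e < i → i < n → pv π i < c := by
    intro i hie hin
    by_contra hge
    have hbg : ∀ j, 1 ≤ j → j ≤ i → c < pv π j := by
      intro j hj1 hji
      rcases Nat.eq_or_lt_of_le hji with heq | hlt
      · rw [heq]; have := hne i (by omega) (by omega); omega
      · by_contra hs
        have := hK j i hj1 hlt hin (by have := hne j (by omega) (by omega); omega)
        omega
    have hcard : (range (i+1)).card ≤ (Finset.Ico c n).card := by
      apply Finset.card_le_card_of_injOn (pv π)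
      · intro a ha
        simp only [Finset.mem_coe, mem_range] at ha
        simp only [Finset.mem_coe, Finset.mem_Ico]
        rcases Nat.eq_zero_or_pos a with rfl | ha1
        · exact ⟨by omega, pv_lt π (by omega)⟩
        · exact ⟨by have := hbg a ha1 (by omega); omega, pv_lt π (by omega)⟩
      · intro a ha b hb hab
        simp only [Finset.coe_range, Set.mem_Iio] at ha hb
        exact pv_inj π (by omega) (by omega) hab
    simp only [Nat.card_Ico, Finset.card_range] at hcard
    omega
  have hfD : ∀ j : Fin e, pv π (j.val + 1) - c - 1 < e := by
    intro j
    have hj := j.isLt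
    have := pv_lt π (show j.val + 1 < n by omega)
    omega
  set fD : Fin e → Fin e := fun j => ⟨pv π (j.val + 1) - c - 1, hfD j⟩ with hfDdef
  have finjD : Function.Injective fD := by
    intro a b hab
    have h1 := hbigpos (a.val + 1) (by omega) (by omega)
    have h2 := hbigpos (b.val + 1) (by omega) (by omega)
    have := Fin.val_eq_of_eq hab
    simp only [hfDdef] at this
    have := pv_inj π (show a.val + 1 < n by omega) (show b.val + 1 < n by omega) (by omega)
    exact Fin.ext (by omega)
  have hfC : ∀ j : Fin c, pv π (e + 1 + j.val) < c := by
    intro j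
    exact hsmallpos (e + 1 + j.val) (by omega) (by omega)
  set fC : Fin c → Fin c := fun j => ⟨pv π (e + 1 + j.val), hfC j⟩ with hfCdef
  have finjC : Function.Injective fC := by
    intro a b hab
    have := Fin.val_eq_of_eq hab
    simp only [hfCdef] at this
    have := pv_inj π (show e + 1 + a.val < n by omega) (show e + 1 + b.val < n by omega)
      (by omega)
    exact Fin.ext (by omega)
  refine ⟨Equiv.ofBijective fD (Finite.injective_iff_bijective.mp finjD),
    Equiv.ofBijective fC (Finite.injective_iff_bijective.mp finjC), ?_⟩
  apply perm_eq_of_pv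
  intro i hi
  rcases Nat.eq_zero_or_pos i with rfl | hi1
  · rw [pv_buildA_zero, h0]
  · by_cases hie : i ≤ e
    · rw [pv_buildA_big (i := i) hn _ _ hi1 hie]
      have hDval : pv (Equiv.ofBijective fD (Finite.injective_iff_bijective.mp finjD))
          (i - 1) = pv π ((i - 1) + 1) - c - 1 := by
        rw [pv_eq _ (show i - 1 < e by omega)]
        rfl
      rw [hDval]
      have e1 : i - 1 + 1 = i := by omega
      rw [e1]
      have := hbigpos i hi1 hie
      omega
    · rw [pv_buildA_small (i := i) hn _ _ (by omega) hi]
      have hCval : pv (Equiv.ofBijective fC (Finite.injective_iff_bijective.mp finjC))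
          (i - e - 1) = pv π (e + 1 + (i - e - 1)) := by
        rw [pv_eq _ (show i - e - 1 < c by omega)]
        rfl
      rw [hCval]
      have e1 : e + 1 + (i - e - 1) = i := by omega
      rw [e1]

lemma surjB {n c e : ℕ} (hn : n = c + e + 1) (hc : 1 ≤ c) (π : Equiv.Perm (Fin n))
    (hav : AvoidsPat π pat231) (h0 : pv π 0 = c) :
    ∃ (C : Equiv.Perm (Fin c)) (D : Equiv.Perm (Fin e)), π = buildB n c e hn C D := by
  have hne : ∀ i : ℕ, 1 ≤ i → i < n → pv π i ≠ c := by
    intro i h1 h2 h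
    have := pv_inj π h2 (by omega) (h.trans h0.symm)
    omega
  have hK : ∀ i j : ℕ, 1 ≤ i → i < j → j < n → c < pv π i → c < pv π j := by
    intro i j h1 h2 h3 hbig
    by_contra hsmall
    have hsmall' : pv π j < c := by have := hne j (by omega) h3; omega
    apply hav
    rw [contains231_pv]
    exact ⟨0, i, j, by omega, h2, h3, by omega, by omega⟩
  have hsmallpos : ∀ i : ℕ, 1 ≤ i → i ≤ c → pv π i < c := by
    intro i hi1 hic
    by_contra hge
    have hbg : ∀ j, i ≤ j → j < n → c < pv π j := by
      intro j hj hjn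
      rcases Nat.eq_or_lt_of_le hj with heq | hlt
      · rw [← heq]; have := hne i (by omega) (by omega); omega
      · exact hK i j hi1 hlt hjn (by have := hne i (by omega) (by omega); omega)
    have hcard : (Finset.Ico i n).card ≤ (Finset.Ico (c+1) n).card := by
      apply Finset.card_le_card_of_injOn (pv π)
      · intro a ha
        simp only [Finset.mem_coe, Finset.mem_Ico] at ha ⊢
        exact ⟨by have := hbg a ha.1 ha.2; omega, pv_lt π ha.2⟩
      · intro a ha b hb hab
        simp only [Finset.coe_Ico, Set.mem_Ico] at ha hb
        exact pv_inj π ha.2 hb.2 hab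
    simp only [Nat.card_Ico] at hcard
    omega
  have hbigpos : ∀ i : ℕ, c < i → i < n → c < pv π i := by
    intro i hic hin
    by_contra hle
    have hsm : ∀ j, 1 ≤ j → j ≤ i → pv π j < c := by
      intro j hj1 hji
      rcases Nat.eq_or_lt_of_le hji with heq | hlt
      · rw [heq]; have := hne i (by omega) (by omega); omega
      · by_contra hs
        have := hK j i hj1 hlt hin (by have := hne j (by omega) (by omega); omega)
        omega
    have hcard : (Finset.Ico 1 (i+1)).card ≤ (range c).card := by
      apply Finset.card_le_card_of_injOn (pv π)
      · intro a ha
        simp only [Finset.mem_coe, Finset.mem_Ico] at ha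
        simp only [Finset.mem_coe, mem_range]
        exact hsm a ha.1 (by omega)
      · intro a ha b hb hab
        simp only [Finset.coe_Ico, Set.mem_Ico] at ha hb
        exact pv_inj π (by omega) (by omega) hab
    simp only [Nat.card_Ico, Finset.card_range] at hcard
    omega
  have hfC : ∀ j : Fin c, pv π (j.val + 1) < c := by
    intro j
    exact hsmallpos (j.val + 1) (by omega) (by omega)
  set fC : Fin c → Fin c := fun j => ⟨pv π (j.val + 1), hfC j⟩ with hfCdef
  have finjC : Function.Injective fC := by
    intro a b hab
    have := Fin.val_eq_of_eq hab
    simp only [hfCdef] at this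
    have := pv_inj π (show a.val + 1 < n by omega) (show b.val + 1 < n by omega) (by omega)
    exact Fin.ext (by omega)
  have hfD : ∀ j : Fin e, pv π (c + 1 + j.val) - c - 1 < e := by
    intro j
    have hj := j.isLt
    have := pv_lt π (show c + 1 + j.val < n by omega)
    omega
  set fD : Fin e → Fin e := fun j => ⟨pv π (c + 1 + j.val) - c - 1, hfD j⟩ with hfDdef
  have finjD : Function.Injective fD := by
    intro a b hab
    have h1 := hbigpos (c + 1 + a.val) (by omega) (by omega)
    have h2 := hbigpos (c + 1 + b.val) (by omega) (by omega)
    have := Fin.val_eq_of_eq hab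
    simp only [hfDdef] at this
    have := pv_inj π (show c + 1 + a.val < n by omega) (show c + 1 + b.val < n by omega)
      (by omega)
    exact Fin.ext (by omega)
  refine ⟨Equiv.ofBijective fC (Finite.injective_iff_bijective.mp finjC),
    Equiv.ofBijective fD (Finite.injective_iff_bijective.mp finjD), ?_⟩
  apply perm_eq_of_pv
  intro i hi
  rcases Nat.eq_zero_or_pos i with rfl | hi1
  · rw [pv_buildB_zero, h0]
  · by_cases hic : i ≤ c
    · rw [pv_buildB_small (i := i) hn _ _ hi1 hic]
      have hCval : pv (Equiv.ofBijective fC (Finite.injective_iff_bijective.mp finjC))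
          (i - 1) = pv π ((i - 1) + 1) := by
        rw [pv_eq _ (show i - 1 < c by omega)]
        rfl
      rw [hCval]
      have e1 : i - 1 + 1 = i := by omega
      rw [e1]
    · rw [pv_buildB_big (i := i) hn _ _ (by omega) hi]
      have hDval : pv (Equiv.ofBijective fD (Finite.injective_iff_bijective.mp finjD))
          (i - c - 1) = pv π (c + 1 + (i - c - 1)) - c - 1 := by
        rw [pv_eq _ (show i - c - 1 < e by omega)]
        rfl
      rw [hDval]
      have e1 : c + 1 + (i - c - 1) = i := by omega
      rw [e1]
      have := hbigpos i (by omega) hi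
      omega

-- ## Decomposition card lemmas

lemma buildB_inj_pair {n c e : ℕ} (hn : n = c + e + 1) {C C' : Equiv.Perm (Fin c)}
    {D D' : Equiv.Perm (Fin e)} (h : buildB n c e hn C D = buildB n c e hn C' D') :
    C = C' ∧ D = D' := by
  constructor
  · apply perm_eq_of_pv
    intro i hi
    have h1 := pv_buildB_small (i := i+1) hn C D (by omega) (by omega)
    have h2 := pv_buildB_small (i := i+1) hn C' D' (by omega) (by omega)
    rw [h] at h1
    have e1 : i + 1 - 1 = i := by omega
    rw [e1] at h1 h2
    omega
  · apply perm_eq_of_pv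
    intro i hi
    have h1 := pv_buildB_big (i := i+c+1) hn C D (by omega) (by omega)
    have h2 := pv_buildB_big (i := i+c+1) hn C' D' (by omega) (by omega)
    rw [h] at h1
    have e1 : i + c + 1 - c - 1 = i := by omega
    rw [e1] at h1 h2
    omega

lemma buildA_inj_pair {n e c : ℕ} (hn : n = e + c + 1) {D D' : Equiv.Perm (Fin e)}
    {C C' : Equiv.Perm (Fin c)} (h : buildA n e c hn D C = buildA n e c hn D' C') :
    D = D' ∧ C = C' := by
  constructor
  · apply perm_eq_of_pv
    intro i hi
    have h1 := pv_buildA_big (i := i+1) hn D C (by omega) (by omega)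
    have h2 := pv_buildA_big (i := i+1) hn D' C' (by omega) (by omega)
    rw [h] at h1
    have e1 : i + 1 - 1 = i := by omega
    rw [e1] at h1 h2
    omega
  · apply perm_eq_of_pv
    intro i hi
    have h1 := pv_buildA_small (i := i+e+1) hn D C (by omega) (by omega)
    have h2 := pv_buildA_small (i := i+e+1) hn D' C' (by omega) (by omega)
    rw [h] at h1
    have e1 : i + e + 1 - e - 1 = i := by omega
    rw [e1] at h1 h2
    omega

lemma card_decomp_zero {n e : ℕ} (hn : n = 0 + e + 1)
    (Pr : Equiv.Perm (Fin n) → Prop) (Q : Equiv.Perm (Fin e) → Prop)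
    (h : ∀ D, Pr (buildB n 0 e hn 1 D) ↔ Q D) :
    (univ.filter fun π : Equiv.Perm (Fin n) => pv π 0 = 0 ∧ Pr π).card
      = (univ.filter Q).card := by
  have hset : (univ.filter fun π : Equiv.Perm (Fin n) => pv π 0 = 0 ∧ Pr π)
      = (univ.filter Q).image (fun D => buildB n 0 e hn 1 D) := by
    ext π
    simp only [mem_filter, mem_univ, true_and, mem_image]
    constructor
    · rintro ⟨h0, hPr⟩
      obtain ⟨D, rfl⟩ := surjB_zero hn π h0
      exact ⟨D, (h D).mp hPr, rfl⟩
    · rintro ⟨D, hQ, rfl⟩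
      exact ⟨pv_buildB_zero hn 1 D, (h D).mpr hQ⟩
  rw [hset, Finset.card_image_of_injOn]
  intro a _ b _ hab
  exact (buildB_inj_pair hn hab).2

lemma card_decompA {n e c : ℕ} (hn : n = e + c + 1) (hc : 1 ≤ c)
    (Pr : Equiv.Perm (Fin n) → Prop)
    (Q : Equiv.Perm (Fin e) → Equiv.Perm (Fin c) → Prop)
    (h : ∀ D C, Pr (buildA n e c hn D C) ↔ Q D C) :
    (univ.filter fun π : Equiv.Perm (Fin n) =>
        AvoidsPat π pat213 ∧ pv π 0 = c ∧ Pr π).card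
      = (univ.filter fun p : Equiv.Perm (Fin e) × Equiv.Perm (Fin c) =>
          (AvoidsPat p.1 pat213 ∧ AvoidsPat p.2 pat213) ∧ Q p.1 p.2).card := by
  have hset : (univ.filter fun π : Equiv.Perm (Fin n) =>
        AvoidsPat π pat213 ∧ pv π 0 = c ∧ Pr π)
      = ((univ.filter fun p : Equiv.Perm (Fin e) × Equiv.Perm (Fin c) =>
          (AvoidsPat p.1 pat213 ∧ AvoidsPat p.2 pat213) ∧ Q p.1 p.2).image
          (fun p => buildA n e c hn p.1 p.2)) := by
    ext π
    simp only [mem_filter, mem_univ, true_and, mem_image]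
    constructor
    · rintro ⟨hav, h0, hPr⟩
      obtain ⟨D, C, rfl⟩ := surjA hn hc π hav h0
      have hav' : AvoidsPat D pat213 ∧ AvoidsPat C pat213 := by
        constructor <;> intro hcon <;> exact hav ((contains213_buildA hn D C).mpr
          (by first | exact Or.inl hcon | exact Or.inr hcon))
      exact ⟨(D, C), ⟨hav', (h D C).mp hPr⟩, rfl⟩
    · rintro ⟨⟨D, C⟩, ⟨⟨havD, havC⟩, hQ⟩, rfl⟩
      refine ⟨?_, pv_buildA_zero hn D C, (h D C).mpr hQ⟩
      intro hcon
      rcases (contains213_buildA hn D C).mp hcon with hc' | hc'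
      · exact havD hc'
      · exact havC hc'
  rw [hset, Finset.card_image_of_injOn]
  intro a _ b _ hab
  obtain ⟨h1, h2⟩ := buildA_inj_pair hn hab
  exact Prod.ext h1 h2

lemma card_decompB {n c e : ℕ} (hn : n = c + e + 1) (hc : 1 ≤ c)
    (Pr : Equiv.Perm (Fin n) → Prop)
    (Q : Equiv.Perm (Fin c) → Equiv.Perm (Fin e) → Prop)
    (h : ∀ C D, Pr (buildB n c e hn C D) ↔ Q C D) :
    (univ.filter fun π : Equiv.Perm (Fin n) =>
        AvoidsPat π pat231 ∧ pv π 0 = c ∧ Pr π).card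
      = (univ.filter fun p : Equiv.Perm (Fin c) × Equiv.Perm (Fin e) =>
          (AvoidsPat p.1 pat231 ∧ AvoidsPat p.2 pat231) ∧ Q p.1 p.2).card := by
  have hset : (univ.filter fun π : Equiv.Perm (Fin n) =>
        AvoidsPat π pat231 ∧ pv π 0 = c ∧ Pr π)
      = ((univ.filter fun p : Equiv.Perm (Fin c) × Equiv.Perm (Fin e) =>
          (AvoidsPat p.1 pat231 ∧ AvoidsPat p.2 pat231) ∧ Q p.1 p.2).image
          (fun p => buildB n c e hn p.1 p.2)) := by
    ext π
    simp only [mem_filter, mem_univ, true_and, mem_image]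
    constructor
    · rintro ⟨hav, h0, hPr⟩
      obtain ⟨C, D, rfl⟩ := surjB hn hc π hav h0
      have hav' : AvoidsPat C pat231 ∧ AvoidsPat D pat231 := by
        constructor <;> intro hcon <;> exact hav ((contains231_buildB hn C D).mpr
          (by first | exact Or.inl hcon | exact Or.inr hcon))
      exact ⟨(C, D), ⟨hav', (h C D).mp hPr⟩, rfl⟩
    · rintro ⟨⟨C, D⟩, ⟨⟨havC, havD⟩, hQ⟩, rfl⟩
      refine ⟨?_, pv_buildB_zero hn C D, (h C D).mpr hQ⟩
      intro hcon
      rcases (contains231_buildB hn C D).mp hcon with hc' | hc'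
      · exact havC hc'
      · exact havD hc'
  rw [hset, Finset.card_image_of_injOn]
  intro a _ b _ hab
  obtain ⟨h1, h2⟩ := buildB_inj_pair hn hab
  exact Prod.ext h1 h2

-- ## Counting functions

noncomputable def c213 (n f d k l : ℕ) : ℕ :=
  (univ.filter fun π : Equiv.Perm (Fin n) =>
    AvoidsPat π pat213 ∧ pv π 0 = f ∧ des π = d ∧ iar π = k ∧ comps π = l).card

noncomputable def c231 (n f d k l : ℕ) : ℕ :=
  (univ.filter fun π : Equiv.Perm (Fin n) =>
    AvoidsPat π pat231 ∧ pv π 0 = f ∧ des π = d ∧ comps π = k ∧ iar π = l).card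

noncomputable def c4213 (n d k l : ℕ) : ℕ :=
  (univ.filter fun π : Equiv.Perm (Fin n) =>
    AvoidsPat π pat213 ∧ des π = d ∧ iar π = k ∧ comps π = l).card

noncomputable def c4231 (n d k l : ℕ) : ℕ :=
  (univ.filter fun π : Equiv.Perm (Fin n) =>
    AvoidsPat π pat231 ∧ des π = d ∧ comps π = k ∧ iar π = l).card

noncomputable def m213 (n d t : ℕ) : ℕ :=
  (univ.filter fun π : Equiv.Perm (Fin n) =>
    AvoidsPat π pat213 ∧ des π = d ∧ iar π = t).card

noncomputable def m231 (n d t : ℕ) : ℕ :=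
  (univ.filter fun π : Equiv.Perm (Fin n) =>
    AvoidsPat π pat231 ∧ des π = d ∧ comps π = t).card

noncomputable def t213 (n d : ℕ) : ℕ :=
  (univ.filter fun π : Equiv.Perm (Fin n) => AvoidsPat π pat213 ∧ des π = d).card

noncomputable def t231 (n d : ℕ) : ℕ :=
  (univ.filter fun π : Equiv.Perm (Fin n) => AvoidsPat π pat231 ∧ des π = d).card

lemma pv_lt_succ {n : ℕ} (π : Equiv.Perm (Fin n)) (i : ℕ) : pv π i < n + 1 := by
  unfold pv
  split
  · exact lt_of_lt_of_le (π _).isLt (by omega)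
  · omega

lemma c4213_eq_sum (n d k l : ℕ) :
    c4213 n d k l = ∑ f ∈ range (n+1), c213 n f d k l := by
  unfold c4213 c213
  rw [Finset.card_eq_sum_card_fiberwise (f := fun π => pv π 0) (t := range (n+1))
    (fun x _ => by simpa using pv_lt_succ x 0)]
  refine Finset.sum_congr rfl fun v _ => ?_
  rw [Finset.filter_filter]
  congr 1
  apply Finset.filter_congr
  intro π _
  tauto

lemma c4231_eq_sum (n d k l : ℕ) :
    c4231 n d k l = ∑ f ∈ range (n+1), c231 n f d k l := by
  unfold c4231 c231
  rw [Finset.card_eq_sum_card_fiberwise (f := fun π => pv π 0) (t := range (n+1))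
    (fun x _ => by simpa using pv_lt_succ x 0)]
  refine Finset.sum_congr rfl fun v _ => ?_
  rw [Finset.filter_filter]
  congr 1
  apply Finset.filter_congr
  intro π _
  tauto

lemma m213_eq_sum (n d t : ℕ) :
    m213 n d t = ∑ l ∈ range (n+1), c4213 n d t l := by
  unfold m213 c4213
  rw [Finset.card_eq_sum_card_fiberwise (f := fun π => comps π) (t := range (n+1))
    (fun x _ => by simpa using lt_of_le_of_lt (comps_le x) (by omega : n < n+1))]
  refine Finset.sum_congr rfl fun v _ => ?_
  rw [Finset.filter_filter]
  congr 1
  apply Finset.filter_congr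
  intro π _
  tauto

lemma m231_eq_sum (n d t : ℕ) :
    m231 n d t = ∑ l ∈ range (n+1), c4231 n d t l := by
  unfold m231 c4231
  rw [Finset.card_eq_sum_card_fiberwise (f := fun π => iar π) (t := range (n+1))
    (fun x _ => by simpa using lt_of_le_of_lt (iar_le x) (by omega : n < n+1))]
  refine Finset.sum_congr rfl fun v _ => ?_
  rw [Finset.filter_filter]
  congr 1
  apply Finset.filter_congr
  intro π _
  tauto

lemma t213_eq_sum (n d : ℕ) :
    t213 n d = ∑ t ∈ range (n+1), m213 n d t := by
  unfold t213 m213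
  rw [Finset.card_eq_sum_card_fiberwise (f := fun π => iar π) (t := range (n+1))
    (fun x _ => by simpa using lt_of_le_of_lt (iar_le x) (by omega : n < n+1))]
  refine Finset.sum_congr rfl fun v _ => ?_
  rw [Finset.filter_filter]
  congr 1
  apply Finset.filter_congr
  intro π _
  tauto

lemma t231_eq_sum (n d : ℕ) :
    t231 n d = ∑ t ∈ range (n+1), m231 n d t := by
  unfold t231 m231
  rw [Finset.card_eq_sum_card_fiberwise (f := fun π => comps π) (t := range (n+1))
    (fun x _ => by simpa using lt_of_le_of_lt (comps_le x) (by omega : n < n+1))]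
  refine Finset.sum_congr rfl fun v _ => ?_
  rw [Finset.filter_filter]
  congr 1
  apply Finset.filter_congr
  intro π _
  tauto

lemma derived_eqs {m : ℕ} (h : ∀ f d k l, c213 m f d k l = c231 m f d k l) :
    (∀ d k l, c4213 m d k l = c4231 m d k l) ∧
    (∀ d t, m213 m d t = m231 m d t) ∧ (∀ d, t213 m d = t231 m d) := by
  have h4 : ∀ d k l, c4213 m d k l = c4231 m d k l := by
    intro d k l
    rw [c4213_eq_sum, c4231_eq_sum]
    exact Finset.sum_congr rfl fun f _ => h f d k l
  have hm : ∀ d t, m213 m d t = m231 m d t := by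
    intro d t
    rw [m213_eq_sum, m231_eq_sum]
    exact Finset.sum_congr rfl fun l _ => h4 d t l
  have ht : ∀ d, t213 m d = t231 m d := by
    intro d
    rw [t213_eq_sum, t231_eq_sum]
    exact Finset.sum_congr rfl fun t _ => hm d t
  exact ⟨h4, hm, ht⟩

-- ## Main equidistribution

lemma iar_perm_zero (π : Equiv.Perm (Fin 0)) : iar π = 0 := by
  apply iar_eq_of
  · exact Or.inl rfl
  · intro m hm; omega

lemma comps_perm_zero (π : Equiv.Perm (Fin 0)) : comps π = 0 := by
  unfold comps
  simp

lemma prod_count_eq {e f : ℕ}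
    (hM : ∀ δ t, m213 e δ t = m231 e δ t) (hT : ∀ δ, t213 f δ = t231 f δ) (d k l : ℕ) :
    (univ.filter fun p : Equiv.Perm (Fin e) × Equiv.Perm (Fin f) =>
        (AvoidsPat p.1 pat213 ∧ AvoidsPat p.2 pat213) ∧
          (des p.1 + des p.2 + 1 = d ∧ iar p.1 + 1 = k ∧ 1 = l)).card
      = (univ.filter fun p : Equiv.Perm (Fin f) × Equiv.Perm (Fin e) =>
        (AvoidsPat p.1 pat231 ∧ AvoidsPat p.2 pat231) ∧
          (des p.1 + des p.2 + 1 = d ∧ comps p.2 + 1 = k ∧ 1 = l)).card := by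
  by_cases hl : 1 = l
  swap
  · rw [Finset.card_eq_zero.mpr (Finset.filter_eq_empty_iff.mpr fun x _ h => hl h.2.2.2),
        Finset.card_eq_zero.mpr (Finset.filter_eq_empty_iff.mpr fun x _ h => hl h.2.2.2)]
  by_cases hk : 1 ≤ k
  swap
  · rw [Finset.card_eq_zero.mpr (Finset.filter_eq_empty_iff.mpr fun x _ h => by omega),
        Finset.card_eq_zero.mpr (Finset.filter_eq_empty_iff.mpr fun x _ h => by omega)]
  rw [Finset.card_eq_sum_card_fiberwise (f := fun p => des p.1) (t := range d)
      (fun x hx => by simp only [Finset.mem_coe, mem_filter] at hx; simp only [Finset.mem_coe, mem_range]; omega),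
      Finset.card_eq_sum_card_fiberwise (f := fun p => des p.2) (t := range d)
      (fun x hx => by simp only [Finset.mem_coe, mem_filter] at hx; simp only [Finset.mem_coe, mem_range]; omega)]
  refine Finset.sum_congr rfl fun d1 hd1 => ?_
  simp only [mem_range] at hd1
  have hL : ((univ.filter fun p : Equiv.Perm (Fin e) × Equiv.Perm (Fin f) =>
        (AvoidsPat p.1 pat213 ∧ AvoidsPat p.2 pat213) ∧
          (des p.1 + des p.2 + 1 = d ∧ iar p.1 + 1 = k ∧ 1 = l)).filter
        fun p => des p.1 = d1)
      = univ.filter fun p : Equiv.Perm (Fin e) × Equiv.Perm (Fin f) =>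
          (AvoidsPat p.1 pat213 ∧ des p.1 = d1 ∧ iar p.1 = k - 1) ∧
          (AvoidsPat p.2 pat213 ∧ des p.2 = d - 1 - d1) := by
    rw [Finset.filter_filter]
    apply Finset.filter_congr
    intro p _
    constructor
    · rintro ⟨⟨⟨h1, h2⟩, h3, h4, h5⟩, h6⟩
      exact ⟨⟨h1, h6, by omega⟩, h2, by omega⟩
    · rintro ⟨⟨h1, h2, h3⟩, h4, h5⟩
      exact ⟨⟨⟨h1, h4⟩, by omega, by omega, hl⟩, h2⟩
  have hR : ((univ.filter fun p : Equiv.Perm (Fin f) × Equiv.Perm (Fin e) =>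
        (AvoidsPat p.1 pat231 ∧ AvoidsPat p.2 pat231) ∧
          (des p.1 + des p.2 + 1 = d ∧ comps p.2 + 1 = k ∧ 1 = l)).filter
        fun p => des p.2 = d1)
      = univ.filter fun p : Equiv.Perm (Fin f) × Equiv.Perm (Fin e) =>
          (AvoidsPat p.1 pat231 ∧ des p.1 = d - 1 - d1) ∧
          (AvoidsPat p.2 pat231 ∧ des p.2 = d1 ∧ comps p.2 = k - 1) := by
    rw [Finset.filter_filter]
    apply Finset.filter_congr
    intro p _
    constructor
    · rintro ⟨⟨⟨h1, h2⟩, h3, h4, h5⟩, h6⟩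
      exact ⟨⟨h1, by omega⟩, h2, h6, by omega⟩
    · rintro ⟨⟨h1, h2⟩, h3, h4, h5⟩
      exact ⟨⟨⟨h1, h3⟩, by omega, by omega, hl⟩, h4⟩
  rw [hL, hR, ← Finset.univ_product_univ,
      Finset.filter_product (p := fun D : Equiv.Perm (Fin e) =>
        AvoidsPat D pat213 ∧ des D = d1 ∧ iar D = k - 1)
        (q := fun C : Equiv.Perm (Fin f) => AvoidsPat C pat213 ∧ des C = d - 1 - d1),
      Finset.card_product,
      ← Finset.univ_product_univ,
      Finset.filter_product (p := fun C : Equiv.Perm (Fin f) =>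
        AvoidsPat C pat231 ∧ des C = d - 1 - d1)
        (q := fun D : Equiv.Perm (Fin e) =>
          AvoidsPat D pat231 ∧ des D = d1 ∧ comps D = k - 1),
      Finset.card_product]
  have e1 : (univ.filter fun D : Equiv.Perm (Fin e) =>
      AvoidsPat D pat213 ∧ des D = d1 ∧ iar D = k - 1).card = m213 e d1 (k-1) := rfl
  have e2 : (univ.filter fun C : Equiv.Perm (Fin f) =>
      AvoidsPat C pat213 ∧ des C = d - 1 - d1).card = t213 f (d-1-d1) := rfl
  have e3 : (univ.filter fun C : Equiv.Perm (Fin f) =>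
      AvoidsPat C pat231 ∧ des C = d - 1 - d1).card = t231 f (d-1-d1) := rfl
  have e4 : (univ.filter fun D : Equiv.Perm (Fin e) =>
      AvoidsPat D pat231 ∧ des D = d1 ∧ comps D = k - 1).card = m231 e d1 (k-1) := rfl
  rw [e1, e2, e3, e4, hM d1 (k-1), hT (d-1-d1)]
  ring

theorem main_eq (n : ℕ) : ∀ f d k l, c213 n f d k l = c231 n f d k l := by
  induction n using Nat.strong_induction_on with
  | _ n IH =>
  intro f d k l
  rcases Nat.eq_zero_or_pos n with rfl | hn
  · unfold c213 c231
    congr 1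
    apply Finset.filter_congr
    intro π _
    have h1 : iar π = 0 := iar_perm_zero π
    have h2 : comps π = 0 := comps_perm_zero π
    have h3 : AvoidsPat π pat213 := by rintro ⟨g, _, _⟩; exact (g 0).elim0
    have h4 : AvoidsPat π pat231 := by rintro ⟨g, _, _⟩; exact (g 0).elim0
    constructor
    · rintro ⟨_, hf, hd, hk, hl⟩
      exact ⟨h4, hf, hd, by omega, by omega⟩
    · rintro ⟨_, hf, hd, hk, hl⟩
      exact ⟨h3, hf, hd, by omega, by omega⟩
  rcases Nat.lt_or_ge f n with hf | hf
  swap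
  · unfold c213 c231
    rw [Finset.card_eq_zero.mpr (Finset.filter_eq_empty_iff.mpr fun π _ h => by
        have := pv_lt π hn; omega),
      Finset.card_eq_zero.mpr (Finset.filter_eq_empty_iff.mpr fun π _ h => by
        have := pv_lt π hn; omega)]
  rcases Nat.eq_zero_or_pos f with rfl | hfpos
  · -- f = 0
    rcases Nat.eq_zero_or_pos k with rfl | hk
    · unfold c213 c231
      rw [Finset.card_eq_zero.mpr (Finset.filter_eq_empty_iff.mpr fun π _ h => by
          have := one_le_iar hn π; omega),
        Finset.card_eq_zero.mpr (Finset.filter_eq_empty_iff.mpr fun π _ h => by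
          have := one_le_comps hn π; omega)]
    rcases Nat.eq_zero_or_pos l with rfl | hl
    · unfold c213 c231
      rw [Finset.card_eq_zero.mpr (Finset.filter_eq_empty_iff.mpr fun π _ h => by
          have := one_le_comps hn π; omega),
        Finset.card_eq_zero.mpr (Finset.filter_eq_empty_iff.mpr fun π _ h => by
          have := one_le_iar hn π; omega)]
    have hn' : n = 0 + (n-1) + 1 := by omega
    have h213 : c213 n 0 d k l = c4213 (n-1) d (k-1) (l-1) := by
      unfold c213 c4213
      have hd := card_decomp_zero hn'
        (fun π => AvoidsPat π pat213 ∧ des π = d ∧ iar π = k ∧ comps π = l)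
        (fun D => AvoidsPat D pat213 ∧ des D = d ∧ iar D = k - 1 ∧ comps D = l - 1) ?_
      · refine Eq.trans (Eq.trans ?_ hd) ?_
        · congr 1
          ext x
          simp only [mem_filter, mem_univ, true_and]
          try tauto
        · congr 1
          ext x
          simp only [mem_filter, mem_univ, true_and]
          try tauto
      · intro D
        have hav : AvoidsPat (buildB n 0 (n-1) hn' 1 D) pat213 ↔ AvoidsPat D pat213 := by
          unfold AvoidsPat
          rw [contains213_buildB_zero hn' 1 D]
        simp only [hav, des_buildB_zero hn' 1 D, iar_buildB_zero hn' 1 D,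
          comps_buildB hn' 1 D]
        constructor
        · rintro ⟨h1, h2, h3, h4⟩
          exact ⟨h1, h2, by omega, by omega⟩
        · rintro ⟨h1, h2, h3, h4⟩
          exact ⟨h1, h2, by omega, by omega⟩
    have h231 : c231 n 0 d k l = c4231 (n-1) d (k-1) (l-1) := by
      unfold c231 c4231
      have hd := card_decomp_zero hn'
        (fun π => AvoidsPat π pat231 ∧ des π = d ∧ comps π = k ∧ iar π = l)
        (fun D => AvoidsPat D pat231 ∧ des D = d ∧ comps D = k - 1 ∧ iar D = l - 1) ?_
      · refine Eq.trans (Eq.trans ?_ hd) ?_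
        · congr 1
          ext x
          simp only [mem_filter, mem_univ, true_and]
          try tauto
        · congr 1
          ext x
          simp only [mem_filter, mem_univ, true_and]
          try tauto
      · intro D
        have hav : AvoidsPat (buildB n 0 (n-1) hn' 1 D) pat231 ↔ AvoidsPat D pat231 := by
          unfold AvoidsPat
          rw [contains231_buildB hn' 1 D]
          constructor
          · intro h hD
            exact h (Or.inr hD)
          · rintro h (hC | hD)
            · exact avoids_perm_zero 1 pat231 hC
            · exact h hD
        simp only [hav, des_buildB_zero hn' 1 D, iar_buildB_zero hn' 1 D,
          comps_buildB hn' 1 D]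
        constructor
        · rintro ⟨h1, h2, h3, h4⟩
          exact ⟨h1, h2, by omega, by omega⟩
        · rintro ⟨h1, h2, h3, h4⟩
          exact ⟨h1, h2, by omega, by omega⟩
    rw [h213, h231]
    exact (derived_eqs (IH (n-1) (by omega))).1 d (k-1) (l-1)
  · -- 1 ≤ f < n
    have hn' : n = (n - 1 - f) + f + 1 := by omega
    have hnB : n = f + (n - 1 - f) + 1 := by omega
    have h213 : c213 n f d k l =
        (univ.filter fun p : Equiv.Perm (Fin (n-1-f)) × Equiv.Perm (Fin f) =>
          (AvoidsPat p.1 pat213 ∧ AvoidsPat p.2 pat213) ∧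
            (des p.1 + des p.2 + 1 = d ∧ iar p.1 + 1 = k ∧ 1 = l)).card := by
      unfold c213
      have hd := card_decompA hn' hfpos
        (fun π => des π = d ∧ iar π = k ∧ comps π = l)
        (fun D C => des D + des C + 1 = d ∧ iar D + 1 = k ∧ 1 = l) ?_
      · refine Eq.trans (Eq.trans ?_ hd) ?_
        · congr 1
          ext x
          simp only [mem_filter, mem_univ, true_and]
          try tauto
        · congr 1
          ext x
          simp only [mem_filter, mem_univ, true_and]
          try tauto
      · intro D C
        simp only [des_buildA_pos hn' D C hfpos, iar_buildA hn' D C hfpos,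
            comps_buildA hn' D C hfpos]
        try tauto
    have h231 : c231 n f d k l =
        (univ.filter fun p : Equiv.Perm (Fin f) × Equiv.Perm (Fin (n-1-f)) =>
          (AvoidsPat p.1 pat231 ∧ AvoidsPat p.2 pat231) ∧
            (des p.1 + des p.2 + 1 = d ∧ comps p.2 + 1 = k ∧ 1 = l)).card := by
      unfold c231
      have hd := card_decompB hnB hfpos
        (fun π => des π = d ∧ comps π = k ∧ iar π = l)
        (fun C D => des C + des D + 1 = d ∧ comps D + 1 = k ∧ 1 = l) ?_
      · refine Eq.trans (Eq.trans ?_ hd) ?_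
        · congr 1
          ext x
          simp only [mem_filter, mem_univ, true_and]
          try tauto
        · congr 1
          ext x
          simp only [mem_filter, mem_univ, true_and]
          try tauto
      · intro C D
        simp only [des_buildB_pos hnB C D hfpos, comps_buildB hnB C D,
            iar_buildB_pos hnB C D hfpos]
        try tauto
    rw [h213, h231]
    exact prod_count_eq (derived_eqs (IH (n-1-f) (by omega))).2.1
      (derived_eqs (IH f (by omega))).2.2 d k l

-- ## Final assembly

lemma exists_equiv_of_fiber_card {α β K : Type*} [Fintype α] [Fintype β] [DecidableEq K]
    (F : α → K) (G : β → K)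
    (h : ∀ kk : K, Fintype.card {a : α // F a = kk} = Fintype.card {b : β // G b = kk}) :
    ∃ θ : α ≃ β, ∀ a, G (θ a) = F a := by
  classical
  refine ⟨(Equiv.sigmaFiberEquiv F).symm.trans
    ((Equiv.sigmaCongrRight (fun kk => Fintype.equivOfCardEq (h kk))).trans
      (Equiv.sigmaFiberEquiv G)), fun a => ?_⟩
  exact (Fintype.equivOfCardEq (h (F a)) ⟨a, rfl⟩).2

/-- there is a bijection `θ : S_n(213) → S_n(231)` preserving the first
letter and `des`, and exchanging `iar` and `comp`; in particular
`|{π ∈ S_n(213) : iar=k, comp=ℓ}| = |{σ ∈ S_n(231) : comp=k, iar=ℓ}|`. -/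
theorem bijection_213_231 (n : ℕ) (hn : 1 ≤ n) :
    (∃ θ : {π : Equiv.Perm (Fin n) // AvoidsPat π pat213} ≃
           {σ : Equiv.Perm (Fin n) // AvoidsPat σ pat231},
      ∀ π : {π : Equiv.Perm (Fin n) // AvoidsPat π pat213},
        π.1 ⟨0, hn⟩ = (θ π).1 ⟨0, hn⟩ ∧ des π.1 = des (θ π).1 ∧
        iar π.1 = comps (θ π).1 ∧ comps π.1 = iar (θ π).1)
    ∧ ∀ k ℓ : ℕ,
      (Finset.univ.filter fun π : Equiv.Perm (Fin n) =>
        AvoidsPat π pat213 ∧ iar π = k ∧ comps π = ℓ).card =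
      (Finset.univ.filter fun σ : Equiv.Perm (Fin n) =>
        AvoidsPat σ pat231 ∧ comps σ = k ∧ iar σ = ℓ).card := by
  classical
  have hfib : ∀ kk : ℕ × ℕ × ℕ × ℕ,
      Fintype.card {a : {π : Equiv.Perm (Fin n) // AvoidsPat π pat213} //
        (pv a.1 0, des a.1, iar a.1, comps a.1) = kk}
      = Fintype.card {b : {σ : Equiv.Perm (Fin n) // AvoidsPat σ pat231} //
        (pv b.1 0, des b.1, comps b.1, iar b.1) = kk} := by
    rintro ⟨f, d, k, l⟩
    have h1 : Fintype.card {a : {π : Equiv.Perm (Fin n) // AvoidsPat π pat213} //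
        (pv a.1 0, des a.1, iar a.1, comps a.1) = (f, d, k, l)} = c213 n f d k l := by
      refine Eq.trans (Fintype.card_congr (Equiv.subtypeSubtypeEquivSubtypeInter
        (fun π : Equiv.Perm (Fin n) => AvoidsPat π pat213)
        (fun π : Equiv.Perm (Fin n) =>
          (pv π 0, des π, iar π, comps π) = (f, d, k, l)))) ?_
      refine Eq.trans (Fintype.card_subtype _) ?_
      unfold c213
      congr 1
      ext π
      simp only [mem_filter, mem_univ, true_and, Prod.mk.injEq]
      try tauto
    have h2 : Fintype.card {b : {σ : Equiv.Perm (Fin n) // AvoidsPat σ pat231} //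
        (pv b.1 0, des b.1, comps b.1, iar b.1) = (f, d, k, l)} = c231 n f d k l := by
      refine Eq.trans (Fintype.card_congr (Equiv.subtypeSubtypeEquivSubtypeInter
        (fun π : Equiv.Perm (Fin n) => AvoidsPat π pat231)
        (fun π : Equiv.Perm (Fin n) =>
          (pv π 0, des π, comps π, iar π) = (f, d, k, l)))) ?_
      refine Eq.trans (Fintype.card_subtype _) ?_
      unfold c231
      congr 1
      ext π
      simp only [mem_filter, mem_univ, true_and, Prod.mk.injEq]
      try tauto
    rw [h1, h2]
    exact main_eq n f d k l
  obtain ⟨θ, hθ⟩ := exists_equiv_of_fiber_card _ _ hfib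
  have hstat : ∀ π : {π : Equiv.Perm (Fin n) // AvoidsPat π pat213},
      pv (θ π).1 0 = pv π.1 0 ∧ des (θ π).1 = des π.1 ∧
      comps (θ π).1 = iar π.1 ∧ iar (θ π).1 = comps π.1 := by
    intro π
    have h := hθ π
    simp only [Prod.mk.injEq] at h
    exact h
  constructor
  · refine ⟨θ, fun π => ?_⟩
    obtain ⟨h1, h2, h3, h4⟩ := hstat π
    refine ⟨?_, h2.symm, h3.symm, h4.symm⟩
    apply Fin.val_injective
    rw [← pv_eq π.1 hn, ← pv_eq (θ π).1 hn]
    exact h1.symm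
  · intro k l
    apply Finset.card_bij (fun π hπ => (θ ⟨π, (Finset.mem_filter.mp hπ).2.1⟩).1)
    · intro π hπ
      obtain ⟨-, hav, hk, hl⟩ := Finset.mem_filter.mp hπ
      obtain ⟨h1, h2, h3, h4⟩ := hstat ⟨π, hav⟩
      simp only [mem_filter, mem_univ, true_and]
      exact ⟨(θ ⟨π, hav⟩).2, by rw [h3]; exact hk, by rw [h4]; exact hl⟩
    · intro a ha b hb hab
      have : (⟨a, (Finset.mem_filter.mp ha).2.1⟩ :
          {π : Equiv.Perm (Fin n) // AvoidsPat π pat213}) =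
          ⟨b, (Finset.mem_filter.mp hb).2.1⟩ := θ.injective (Subtype.ext hab)
      exact congrArg Subtype.val this
    · intro σ hσ
      obtain ⟨-, hav, hk, hl⟩ := Finset.mem_filter.mp hσ
      set x := θ.symm ⟨σ, hav⟩ with hx
      have hθx : θ x = ⟨σ, hav⟩ := θ.apply_symm_apply _
      obtain ⟨h1, h2, h3, h4⟩ := hstat x
      rw [hθx] at h3 h4
      refine ⟨x.1, ?_, ?_⟩
      · simp only [mem_filter, mem_univ, true_and]
        exact ⟨x.2, by rw [← h3]; exact hk, by rw [← h4]; exact hl⟩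
      · have hxx : ∀ hh : AvoidsPat x.1 pat213,
            (⟨x.1, hh⟩ : {π : Equiv.Perm (Fin n) // AvoidsPat π pat213}) = x :=
          fun hh => Subtype.ext rfl
        rw [hxx, hθx]
end
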